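/- arXiv:1507.00151 — 10 statements merged into one kernel-verified Lean document; each statement's English description precedes it below -/
import Mathlib

section
/- Let X be a complex Banach space and let S and T be compact linear operators on X. Let z ∈ ρ(T) be a point of the resolvent set of T and assume ‖(T−S)∘S‖ · ‖(z·I−T)⁻¹‖ < |z|. Then z ∈ ρ(S), and the inverse satisfies the bound ‖(z·I−S)⁻¹‖ ≤ (1 + ‖S‖·‖(z·I−T)⁻¹‖) / (|z| − ‖(z·I−T)⁻¹‖·‖(T−S)∘S‖). -/
/-!
With `R = (z - T)⁻¹`, the identity `(1 + R S)(z - S) = z + R (T - S) S` gives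
`(‖z‖ - ‖R‖ ‖(T - S) S‖) ‖x‖ ≤ (1 + ‖S‖ ‖R‖) ‖(z - S) x‖`, so under the hypothesis `z - S` is
bounded below. In particular `z` is not an eigenvalue of the compact operator `S`, and `z ≠ 0`,
so by the Fredholm alternative `z ∈ ρ(S)`; the lower bound then bounds `‖(z - S)⁻¹‖`.
-/

open ContinuousLinearMap

theorem one_add_mul_mul_algebraMap_sub {𝕜 A : Type*} [CommSemiring 𝕜] [Ring A] [Algebra 𝕜 A]
    {r s t : A} {z : 𝕜} (hr : r * (algebraMap 𝕜 A z - t) = 1) :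
    (1 + r * s) * (algebraMap 𝕜 A z - s) = algebraMap 𝕜 A z + r * ((t - s) * s) := by
  have hrz : r * algebraMap 𝕜 A z = 1 + r * t := by rwa [mul_sub, sub_eq_iff_eq_add] at hr
  calc (1 + r * s) * (algebraMap 𝕜 A z - s)
      = algebraMap 𝕜 A z - s + r * (algebraMap 𝕜 A z * s) - r * (s * s) := by
        rw [Algebra.commutes]; noncomm_ring
    _ = algebraMap 𝕜 A z + r * ((t - s) * s) := by rw [← mul_assoc, hrz]; noncomm_ring

section Operators

variable {𝕜 X : Type*} [NontriviallyNormedField 𝕜] [NormedAddCommGroup X] [NormedSpace 𝕜 X]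

theorem norm_ringInverse_le_of_norm_le_mul {b : X →L[𝕜] X} (hb : IsUnit b) {K : ℝ} (hK : 0 ≤ K)
    (h : ∀ x, ‖x‖ ≤ K * ‖b x‖) : ‖Ring.inverse b‖ ≤ K := by
  refine opNorm_le_bound _ hK fun y => ?_
  calc ‖Ring.inverse b y‖ ≤ K * ‖b (Ring.inverse b y)‖ := h _
    _ = K * ‖y‖ := by rw [← mul_apply_eq_comp, Ring.mul_inverse_cancel b hb, one_apply_eq_self]

theorem norm_le_mul_norm_algebraMap_sub_apply {S T : X →L[𝕜] X} {z : 𝕜}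
    (hz : z ∈ resolventSet 𝕜 T) (x : X) :
    (‖z‖ - ‖resolvent T z‖ * ‖(T - S).comp S‖) * ‖x‖ ≤
      (1 + ‖S‖ * ‖resolvent T z‖) * ‖(algebraMap 𝕜 (X →L[𝕜] X) z - S) x‖ := by
  set R := resolvent T z
  have hR : R * (algebraMap 𝕜 (X →L[𝕜] X) z - T) = 1 := Ring.inverse_mul_cancel _ hz
  set b := algebraMap 𝕜 (X →L[𝕜] X) z - S
  have hfactor : (1 + R * S) (b x) = z • x + (R * (T - S).comp S) x := by
    rw [← mul_apply_eq_comp, one_add_mul_mul_algebraMap_sub hR]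
    simp [Algebra.algebraMap_eq_smul_one]
  have hRS : ‖1 + R * S‖ ≤ 1 + ‖S‖ * ‖R‖ := by
    grw [norm_add_le, show ‖(1 : X →L[𝕜] X)‖ ≤ 1 from norm_id_le, norm_mul_le, mul_comm ‖R‖]
  have hzx : ‖z‖ * ‖x‖ ≤ (1 + ‖S‖ * ‖R‖) * ‖b x‖ + ‖R‖ * ‖(T - S).comp S‖ * ‖x‖ :=
    calc ‖z‖ * ‖x‖ = ‖(1 + R * S) (b x) - (R * (T - S).comp S) x‖ := by
          rw [hfactor, add_sub_cancel_right, norm_smul]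
      _ ≤ ‖(1 + R * S) (b x)‖ + ‖(R * (T - S).comp S) x‖ := norm_sub_le _ _
      _ ≤ _ := by
          gcongr
          · exact (le_opNorm _ _).trans (by gcongr)
          · exact (le_opNorm _ _).trans (by gcongr; exact norm_mul_le _ _)
  linarith

theorem IsCompactOperator.mem_resolventSet_of_injective [CompleteSpace X] {S : X →L[𝕜] X}
    (hS : IsCompactOperator S) {z : 𝕜} (hz : z ≠ 0)
    (hinj : Function.Injective (algebraMap 𝕜 (X →L[𝕜] X) z - S)) : z ∈ resolventSet 𝕜 S := by
  refine (hS.hasEigenvalue_or_mem_resolventSet hz).resolve_left fun hev => ?_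
  obtain ⟨x, hx⟩ := hev.exists_hasEigenvector
  refine hx.2 (hinj ?_)
  simpa [Algebra.algebraMap_eq_smul_one, sub_eq_zero] using hx.apply_eq_smul.symm

end Operators

theorem stmt0_general {X : Type*} [NormedAddCommGroup X] [NormedSpace ℂ X] [CompleteSpace X]
    (S T : X →L[ℂ] X) (hS : IsCompactOperator ⇑S)
    (z : ℂ) (hz : z ∈ resolventSet ℂ T)
    (hbound : ‖(T - S).comp S‖ * ‖resolvent T z‖ < ‖z‖) :
    z ∈ resolventSet ℂ S ∧
      ‖resolvent S z‖ ≤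
        (1 + ‖S‖ * ‖resolvent T z‖) / (‖z‖ - ‖resolvent T z‖ * ‖(T - S).comp S‖) := by
  set c := ‖z‖ - ‖resolvent T z‖ * ‖(T - S).comp S‖
  set d := 1 + ‖S‖ * ‖resolvent T z‖
  have hc : 0 < c := by linarith [mul_comm ‖(T - S).comp S‖ ‖resolvent T z‖]
  have hz0 : z ≠ 0 := norm_pos_iff.mp (hbound.trans_le' (by positivity))
  have hlower (x : X) : ‖x‖ ≤ d / c * ‖(algebraMap ℂ (X →L[ℂ] X) z - S) x‖ := by
    rw [div_mul_eq_mul_div, le_div_iff₀ hc, mul_comm]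
    exact norm_le_mul_norm_algebraMap_sub_apply hz x
  have hinj : Function.Injective (algebraMap ℂ (X →L[ℂ] X) z - S) :=
    (injective_iff_map_eq_zero _).mpr fun x hx =>
      norm_le_zero_iff.mp (by simpa [hx] using hlower x)
  have hSz : z ∈ resolventSet ℂ S := hS.mem_resolventSet_of_injective hz0 hinj
  exact ⟨hSz, norm_ringInverse_le_of_norm_le_mul hSz (by positivity) hlower⟩

/-- Let `X` be a complex Banach space and `S`, `T` compact linear
operators on `X`. If `z ∈ ρ(T)` and `‖(T−S)∘S‖ · ‖(z·I−T)⁻¹‖ < |z|`, then `z ∈ ρ(S)`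
and `‖(z·I−S)⁻¹‖ ≤ (1 + ‖S‖·‖(z·I−T)⁻¹‖) / (|z| − ‖(z·I−T)⁻¹‖·‖(T−S)∘S‖)`. -/
theorem stmt0 {X : Type*} [NormedAddCommGroup X] [NormedSpace ℂ X] [CompleteSpace X]
    (S T : X →L[ℂ] X) (hS : IsCompactOperator ⇑S) (hT : IsCompactOperator ⇑T)
    (z : ℂ) (hz : z ∈ resolventSet ℂ T)
    (hbound : ‖(T - S).comp S‖ * ‖resolvent T z‖ < ‖z‖) :
    z ∈ resolventSet ℂ S ∧
      ‖resolvent S z‖ ≤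
        (1 + ‖S‖ * ‖resolvent T z‖) / (‖z‖ - ‖resolvent T z‖ * ‖(T - S).comp S‖) :=
  stmt0_general S T hS z hz hbound
end

section
/- Let X be a complex Banach space and let S and T be compact linear operators on X. Then the spectrum of S satisfies σ(S) ⊆ {0} ∪ σ(T) ∪ {z ∈ ρ(T) : |z| ≤ ‖(z·I−T)⁻¹‖ · ‖(T−S)∘S‖}. -/
/-!
Write `R = (z - T)⁻¹`. Since `R T = z R - 1`, one has the identity
`z⁻¹ (1 + R S) (z - S) = 1 + z⁻¹ R (T - S) S`, and when `‖R‖ ‖(T - S) S‖ < |z|` the right-hand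
side is invertible by the Neumann series. So `z - S` has a left inverse and is injective; since `S`
is compact and `z ≠ 0`, the Fredholm alternative then puts `z` in the resolvent set of `S`.
-/

theorem one_add_resolvent_mul_mul_algebraMap_sub {R A : Type*} [CommRing R] [Ring A] [Algebra R A]
    {a b : A} {z : R} (hz : z ∈ resolventSet R a) :
    (1 + resolvent a z * b) * (algebraMap R A z - b) =
      algebraMap R A z + resolvent a z * ((a - b) * b) := by
  have hleft : resolvent a z * (algebraMap R A z - a) = 1 := Ring.inverse_mul_cancel _ hz
  have hcomm : b * algebraMap R A z = algebraMap R A z * b := (Algebra.commutes z b).symm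
  calc (1 + resolvent a z * b) * (algebraMap R A z - b)
      = algebraMap R A z - b + resolvent a z * (algebraMap R A z - a) * b
          + resolvent a z * ((a - b) * b) := by
        simp only [mul_sub, sub_mul, add_mul, one_mul, mul_assoc, hcomm]; abel
    _ = algebraMap R A z + resolvent a z * ((a - b) * b) := by rw [hleft, one_mul]; abel

theorem exists_mul_algebraMap_sub_eq_one_of_norm_resolvent_mul_lt {𝕜 A : Type*} [NormedField 𝕜]
    [NormedRing A] [NormedAlgebra 𝕜 A] [HasSummableGeomSeries A] {a b : A} {z : 𝕜}
    (hz : z ∈ resolventSet 𝕜 a) (hz0 : z ≠ 0) (hlt : ‖resolvent a z‖ * ‖(a - b) * b‖ < ‖z‖) :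
    ∃ u : A, u * (algebraMap 𝕜 A z - b) = 1 := by
  set c := z⁻¹ • (resolvent a z * ((a - b) * b))
  have hc : ‖-c‖ < 1 := by
    rw [norm_neg, norm_smul, norm_inv, inv_mul_lt_one₀ (norm_pos_iff.mpr hz0)]
    exact (norm_mul_le _ _).trans_lt hlt
  have hunit : IsUnit (1 + c) := by simpa using isUnit_one_sub_of_norm_lt_one hc
  refine ⟨↑hunit.unit⁻¹ * z⁻¹ • (1 + resolvent a z * b), ?_⟩
  rw [mul_assoc, smul_mul_assoc, one_add_resolvent_mul_mul_algebraMap_sub hz, smul_add,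
    Algebra.algebraMap_eq_smul_one, smul_smul, inv_mul_cancel₀ hz0, one_smul]
  exact hunit.val_inv_mul

theorem IsCompactOperator.mem_resolventSet_of_injective_s2 {𝕜 X : Type*} [NontriviallyNormedField 𝕜]
    [NormedAddCommGroup X] [NormedSpace 𝕜 X] [CompleteSpace X] {T : X →L[𝕜] X} {μ : 𝕜}
    (hT : IsCompactOperator T) (hμ : μ ≠ 0)
    (hinj : Function.Injective (algebraMap 𝕜 (X →L[𝕜] X) μ - T)) :
    μ ∈ resolventSet 𝕜 T := by
  refine (hT.hasEigenvalue_or_mem_resolventSet hμ).resolve_left fun hev => ?_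
  obtain ⟨x, hx⟩ := hev.exists_hasEigenvector
  refine hx.2 (hinj ?_)
  rw [map_zero, sub_apply, ContinuousLinearMap.algebraMap_apply, sub_eq_zero]
  exact hx.apply_eq_smul.symm

theorem stmt2_general {X : Type*} [NormedAddCommGroup X] [NormedSpace ℂ X] [CompleteSpace X]
    (S T : X →L[ℂ] X) (hS : IsCompactOperator ⇑S) :
    spectrum ℂ S ⊆
      {0} ∪ spectrum ℂ T ∪
        {z : ℂ | z ∈ resolventSet ℂ T ∧ ‖z‖ ≤ ‖resolvent T z‖ * ‖(T - S).comp S‖} := by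
  intro z hzS
  by_contra! hz
  simp only [Set.mem_union, Set.mem_singleton_iff, Set.mem_ofPred_eq, not_or, not_and, not_le,
    spectrum.notMem_iff] at hz
  obtain ⟨⟨hz0, hzT⟩, hlt⟩ := hz
  obtain ⟨U, hU⟩ := exists_mul_algebraMap_sub_eq_one_of_norm_resolvent_mul_lt hzT hz0 (hlt hzT)
  have hinj : Function.Injective (algebraMap ℂ (X →L[ℂ] X) z - S) :=
    Function.LeftInverse.injective (g := U) fun x => by
      rw [← mul_apply_eq_comp, hU, one_apply_eq_self]
  exact hzS (hS.mem_resolventSet_of_injective_s2 hz0 hinj)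

/-- Let `X` be a complex Banach space and `S`, `T` compact linear
operators on `X`. Then
`σ(S) ⊆ {0} ∪ σ(T) ∪ {z ∈ ρ(T) : |z| ≤ ‖(z·I−T)⁻¹‖·‖(T−S)∘S‖}`. -/
theorem stmt2 {X : Type*} [NormedAddCommGroup X] [NormedSpace ℂ X] [CompleteSpace X]
    (S T : X →L[ℂ] X) (hS : IsCompactOperator ⇑S) (hT : IsCompactOperator ⇑T) :
    spectrum ℂ S ⊆
      {0} ∪ spectrum ℂ T ∪
        {z : ℂ | z ∈ resolventSet ℂ T ∧ ‖z‖ ≤ ‖resolvent T z‖ * ‖(T - S).comp S‖} :=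
  stmt2_general S T hS
end

section
/- Let E be a measurable space, μ a probability measure on E, and X_1, X_2, … independent E-valued random variables each with law μ. Let F be a countable family of measurable functions from E to [−1,1]. Let ε > 0, let n be a natural number with n ≥ 8/ε², and suppose there exist m measurable functions g_1, …, g_m : E → [−1,1] forming an (ε/8)-net for F in the uniform norm, i.e. every f ∈ F satisfies sup_{x∈E} |f(x) − g_j(x)| < ε/8 for some j. Then the probability that sup_{f∈F} |(1/n)∑_{i=1}^n f(X_i) − ∫_E f dμ| > ε is at most 8·m·exp(−n·ε²/128). -/
/-!
Each `g j` takes values in `[-1, 1]`, so by Hoeffding's lemma the centred variables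
`g j (X k) - p(g j)` are sub-Gaussian with parameter `1`, and Hoeffding's inequality gives
`P(|p_n(g j) - p(g j)| ≥ t) ≤ 2 exp(-n t² / 2)`. If `‖F i - g j‖_∞ ≤ ε / 8`, then
`|p_n(F i) - p(F i)|` and `|p_n(g j) - p(g j)|` differ by at most `ε / 4`, so the supremum
over `F` exceeds `ε` only if some `g j` deviates by at least `3ε / 4`; a union bound over the
`m` net functions finishes the proof.
-/

open MeasureTheory ProbabilityTheory Real Finset

noncomputable def empiricalMean {E : Type*} (x : ℕ → E) (n : ℕ) (f : E → ℝ) : ℝ :=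
  (1 / (n : ℝ)) * ∑ k ∈ range n, f (x k)

lemma abs_empiricalMean_sub_le {E : Type*} (x : ℕ → E) (n : ℕ) {f g : E → ℝ} {δ : ℝ}
    (hδ : 0 ≤ δ) (hfg : ∀ y, |f y - g y| ≤ δ) :
    |empiricalMean x n f - empiricalMean x n g| ≤ δ := by
  rcases n.eq_zero_or_pos with rfl | hn
  · simpa [empiricalMean] using hδ
  have hsum : |∑ k ∈ range n, (f (x k) - g (x k))| ≤ n * δ := by
    calc |∑ k ∈ range n, (f (x k) - g (x k))| ≤ ∑ k ∈ range n, |f (x k) - g (x k)| :=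
          abs_sum_le_sum_abs _ _
      _ ≤ ∑ _k ∈ range n, δ := sum_le_sum fun k _ ↦ hfg (x k)
      _ = n * δ := by simp
  rw [empiricalMean, empiricalMean, ← mul_sub, ← sum_sub_distrib, abs_mul,
    abs_of_pos (by positivity)]
  calc 1 / (n : ℝ) * |∑ k ∈ range n, (f (x k) - g (x k))| ≤ 1 / n * (n * δ) := by gcongr
    _ = δ := by field_simp

lemma abs_integral_sub_le_of_abs_sub_le {E : Type*} [MeasurableSpace E] {μ : Measure E}
    [IsProbabilityMeasure μ] {f g : E → ℝ} (hf : AEStronglyMeasurable f μ) (hg : Integrable g μ)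
    {δ : ℝ} (hfg : ∀ y, |f y - g y| ≤ δ) :
    |∫ y, f y ∂μ - ∫ y, g y ∂μ| ≤ δ := by
  have hfg_int : Integrable (f - g) μ :=
    (integrable_const δ).mono' (hf.sub hg.aestronglyMeasurable) (ae_of_all _ hfg)
  have hf_int : Integrable f μ := by simpa using hfg_int.add hg
  rw [← integral_sub hf_int hg]
  simpa using norm_integral_le_of_norm_le_const (μ := μ) (f := f - g) (ae_of_all _ hfg)

lemma abs_empiricalMean_sub_integral_le {E : Type*} [MeasurableSpace E] {μ : Measure E}
    [IsProbabilityMeasure μ] (x : ℕ → E) (n : ℕ) {f g : E → ℝ} (hf : AEStronglyMeasurable f μ)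
    (hg : Integrable g μ) {δ : ℝ} (hδ : 0 ≤ δ) (hfg : ∀ y, |f y - g y| ≤ δ) :
    |empiricalMean x n f - ∫ y, f y ∂μ| ≤ |empiricalMean x n g - ∫ y, g y ∂μ| + 2 * δ := by
  have h₁ := abs_empiricalMean_sub_le x n hδ hfg
  have h₂ := abs_integral_sub_le_of_abs_sub_le hf hg hfg
  rw [abs_sub_comm] at h₂
  calc |empiricalMean x n f - ∫ y, f y ∂μ|
      = |(empiricalMean x n g - ∫ y, g y ∂μ) + (empiricalMean x n f - empiricalMean x n g)
          + (∫ y, g y ∂μ - ∫ y, f y ∂μ)| := by ring_nf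
    _ ≤ _ := (abs_add_three _ _ _).trans (by linarith)

lemma measure_abs_sum_range_ge_le_of_iIndepFun {Ω : Type*} [MeasurableSpace Ω] {P : Measure Ω}
    {Y : ℕ → Ω → ℝ} (hindep : iIndepFun Y P) {c : NNReal} {n : ℕ}
    (hY : ∀ k < n, HasSubgaussianMGF (Y k) c P) {t : ℝ} (ht : 0 ≤ t) :
    P {ω | t ≤ |∑ k ∈ range n, Y k ω|} ≤ ENNReal.ofReal (2 * exp (-t ^ 2 / (2 * n * c))) := by
  have : IsProbabilityMeasure P := hindep.isProbabilityMeasure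
  have hneg : iIndepFun (fun k ω ↦ -Y k ω) P := hindep.comp (fun _ y ↦ -y) fun _ ↦ measurable_neg
  have hup := HasSubgaussianMGF.measure_sum_range_ge_le_of_iIndepFun hindep hY ht
  have hlow := HasSubgaussianMGF.measure_sum_range_ge_le_of_iIndepFun hneg
    (fun k hk ↦ (hY k hk).neg) ht
  calc P {ω | t ≤ |∑ k ∈ range n, Y k ω|}
      ≤ P ({ω | t ≤ ∑ k ∈ range n, Y k ω} ∪ {ω | t ≤ ∑ k ∈ range n, -Y k ω}) := by
        refine measure_mono fun ω hω ↦ ?_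
        simpa [le_abs', or_comm, le_neg] using hω
    _ ≤ P {ω | t ≤ ∑ k ∈ range n, Y k ω} + P {ω | t ≤ ∑ k ∈ range n, -Y k ω} :=
        measure_union_le _ _
    _ ≤ _ := by
      rw [← ofReal_measureReal, ← ofReal_measureReal,
        ← ENNReal.ofReal_add (by positivity) (by positivity), two_mul]
      gcongr

lemma hasSubgaussianMGF_comp_sub_integral {E Ω : Type*} [MeasurableSpace E] [MeasurableSpace Ω]
    {μ : Measure E} {P : Measure Ω} [IsProbabilityMeasure P] {X : Ω → E} (hX : Measurable X)
    (hlaw : P.map X = μ) {g : E → ℝ} (hg : Measurable g) {a b : ℝ} (hgab : ∀ y, g y ∈ Set.Icc a b) :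
    HasSubgaussianMGF (fun ω ↦ g (X ω) - ∫ y, g y ∂μ) ((‖b - a‖₊ / 2) ^ 2) P := by
  have hmean : ∫ ω, g (X ω) ∂P = ∫ y, g y ∂μ := by
    rw [← hlaw, integral_map hX.aemeasurable hg.aestronglyMeasurable]
  simpa only [Function.comp_apply, hmean] using
    hasSubgaussianMGF_of_mem_Icc (hg.comp hX).aemeasurable (ae_of_all P fun ω ↦ hgab (X ω))

lemma measure_abs_empiricalMean_sub_integral_ge_le {E Ω : Type*} [MeasurableSpace E]
    [MeasurableSpace Ω] {μ : Measure E} {P : Measure Ω} [IsProbabilityMeasure P]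
    {X : ℕ → Ω → E} (hX : ∀ k, Measurable (X k)) (hindep : iIndepFun X P)
    (hlaw : ∀ k, P.map (X k) = μ) {g : E → ℝ} (hg : Measurable g) {a b : ℝ}
    (hgab : ∀ y, g y ∈ Set.Icc a b) (n : ℕ) {t : ℝ} (ht : 0 ≤ t) :
    P {ω | t ≤ |empiricalMean (X · ω) n g - ∫ y, g y ∂μ|}
      ≤ ENNReal.ofReal (2 * exp (-2 * n * t ^ 2 / (b - a) ^ 2)) := by
  rcases n.eq_zero_or_pos with rfl | hn
  · simpa using prob_le_one.trans (ENNReal.one_le_ofReal.2 one_le_two)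
  set Y : ℕ → Ω → ℝ := fun k ω ↦ g (X k ω) - ∫ y, g y ∂μ
  have hY : iIndepFun Y P := hindep.comp (fun _ y ↦ g y - ∫ y, g y ∂μ) fun _ ↦ hg.sub_const _
  have hsum : ∀ ω, ∑ k ∈ range n, Y k ω = n * (empiricalMean (X · ω) n g - ∫ y, g y ∂μ) := by
    intro ω
    simp only [Y, empiricalMean, sum_sub_distrib, sum_const, card_range, nsmul_eq_mul]
    field_simp
  have hbound := measure_abs_sum_range_ge_le_of_iIndepFun (n := n) hY
    (fun k _ ↦ hasSubgaussianMGF_comp_sub_integral (hX k) (hlaw k) hg hgab)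
    (mul_nonneg n.cast_nonneg ht)
  calc P {ω | t ≤ |empiricalMean (X · ω) n g - ∫ y, g y ∂μ|}
      = P {ω | n * t ≤ |∑ k ∈ range n, Y k ω|} := by
        simp_rw [hsum, abs_mul, Nat.abs_cast, mul_le_mul_iff_right₀ (Nat.cast_pos.2 hn)]
    _ ≤ _ := hbound.trans_eq ?_
  have hc : (((‖b - a‖₊ / 2) ^ 2 : NNReal) : ℝ) = (b - a) ^ 2 / 4 := by
    simp only [NNReal.coe_pow, NNReal.coe_div, coe_nnnorm, Real.norm_eq_abs, sq_abs, div_pow]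
    norm_num
  rw [hc]
  congr 3
  rcases eq_or_ne (b - a) 0 with hab | hab
  · simp [hab]
  field_simp
  ring

theorem stmt3_general {E Ω : Type*} [MeasurableSpace E] [MeasurableSpace Ω]
    (μ : Measure E) [IsProbabilityMeasure μ]
    (P : Measure Ω) [IsProbabilityMeasure P]
    (X : ℕ → Ω → E) (hXmeas : ∀ i, Measurable (X i))
    (hindep : ProbabilityTheory.iIndepFun X P)
    (hlaw : ∀ i, Measure.map (X i) P = μ)
    {ι : Type*} (F : ι → E → ℝ)
    (hFmeas : ∀ i, Measurable (F i))
    (ε : ℝ) (hε : 0 < ε) (n : ℕ)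
    (m : ℕ) (g : Fin m → E → ℝ)
    (hgmeas : ∀ j, Measurable (g j))
    (hgbdd : ∀ j x, g j x ∈ Set.Icc (-1 : ℝ) 1)
    (hnet : ∀ i : ι, ∃ j : Fin m, ∀ x : E, |F i x - g j x| < ε / 8) :
    P {ω : Ω | ε <
        ⨆ i : ι, |(1 / (n : ℝ)) * ∑ k ∈ Finset.range n, F i (X k ω) - ∫ x, F i x ∂μ|}
      ≤ ENNReal.ofReal (8 * m * Real.exp (-((n : ℝ) * ε ^ 2) / 128)) := by
  have hcover : {ω : Ω | ε < ⨆ i : ι, |empiricalMean (X · ω) n (F i) - ∫ x, F i x ∂μ|}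
      ⊆ ⋃ j, {ω | 3 * ε / 4 ≤ |empiricalMean (X · ω) n (g j) - ∫ x, g j x ∂μ|} := by
    intro ω (hω : ε < ⨆ i, _)
    rcases isEmpty_or_nonempty ι with hι | hι
    · rw [Real.iSup_of_isEmpty] at hω
      exact absurd hω hε.not_gt
    obtain ⟨i, hi⟩ := exists_lt_of_lt_ciSup hω
    obtain ⟨j, hj⟩ := hnet i
    have hgj : Integrable (g j) μ :=
      Integrable.of_mem_Icc (-1) 1 (hgmeas j).aemeasurable (ae_of_all _ (hgbdd j))
    have := abs_empiricalMean_sub_integral_le (X · ω) n (hFmeas i).aestronglyMeasurable hgj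
      (by positivity) fun x ↦ (hj x).le
    exact Set.mem_iUnion.2 ⟨j, show 3 * ε / 4 ≤ _ by linarith⟩
  calc _ ≤ P (⋃ j, {ω | 3 * ε / 4 ≤ |empiricalMean (X · ω) n (g j) - ∫ x, g j x ∂μ|}) :=
        measure_mono hcover
    _ ≤ ∑ j, P {ω | 3 * ε / 4 ≤ |empiricalMean (X · ω) n (g j) - ∫ x, g j x ∂μ|} :=
        measure_iUnion_fintype_le _ _
    _ ≤ ∑ _j : Fin m, ENNReal.ofReal (2 * exp (-2 * n * (3 * ε / 4) ^ 2 / (1 - -1) ^ 2)) :=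
        sum_le_sum fun j _ ↦ measure_abs_empiricalMean_sub_integral_ge_le hXmeas hindep hlaw
          (hgmeas j) (hgbdd j) n (by positivity)
    _ ≤ _ := by
      rw [sum_const, card_univ, Fintype.card_fin, nsmul_eq_mul, ← ENNReal.ofReal_natCast,
        ← ENNReal.ofReal_mul m.cast_nonneg]
      refine ENNReal.ofReal_le_ofReal ?_
      have : exp (-2 * n * (3 * ε / 4) ^ 2 / (1 - -1) ^ 2) ≤ exp (-(n * ε ^ 2) / 128) :=
        exp_le_exp.2 (by nlinarith [sq_nonneg ε, n.cast_nonneg (α := ℝ)])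
      nlinarith [exp_pos (-(n * ε ^ 2) / 128), m.cast_nonneg (α := ℝ)]

/-- (Empirical process bound via a uniform-norm net.)
If `X_1, X_2, …` are i.i.d. with law `μ`, `F` is a countable family of measurable
functions to `[−1,1]`, `ε > 0`, `n ≥ 8/ε²`, and `g_1,…,g_m` is an `(ε/8)`-net for `F`
in the uniform norm, then
`P(sup_{f∈F} |(1/n)∑_{i=1}^n f(X_i) − ∫ f dμ| > ε) ≤ 8·m·exp(−n·ε²/128)`. -/
theorem stmt3 {E Ω : Type*} [MeasurableSpace E] [MeasurableSpace Ω]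
    (μ : Measure E) [IsProbabilityMeasure μ]
    (P : Measure Ω) [IsProbabilityMeasure P]
    (X : ℕ → Ω → E) (hXmeas : ∀ i, Measurable (X i))
    (hindep : ProbabilityTheory.iIndepFun X P)
    (hlaw : ∀ i, Measure.map (X i) P = μ)
    {ι : Type*} [Countable ι] (F : ι → E → ℝ)
    (hFmeas : ∀ i, Measurable (F i))
    (hFbdd : ∀ i x, F i x ∈ Set.Icc (-1 : ℝ) 1)
    (ε : ℝ) (hε : 0 < ε) (n : ℕ) (hn : 8 / ε ^ 2 ≤ (n : ℝ))
    (m : ℕ) (g : Fin m → E → ℝ)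
    (hgmeas : ∀ j, Measurable (g j))
    (hgbdd : ∀ j x, g j x ∈ Set.Icc (-1 : ℝ) 1)
    (hnet : ∀ i : ι, ∃ j : Fin m, ∀ x : E, |F i x - g j x| < ε / 8) :
    P {ω : Ω | ε <
        ⨆ i : ι, |(1 / (n : ℝ)) * ∑ k ∈ Finset.range n, F i (X k ω) - ∫ x, F i x ∂μ|}
      ≤ ENNReal.ofReal (8 * m * Real.exp (-((n : ℝ) * ε ^ 2) / 128)) :=
  stmt3_general μ P X hXmeas hindep hlaw F hFmeas ε hε n m g hgmeas hgbdd hnet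
end

section
/- Let R : [0,∞) → ℝ be Lipschitz with constant L, bounded by B, and satisfy R(r) = 0 for all r > 1. Then there exists a constant C > 0 depending only on L and B (one may take C = max(5L/4, 2B)) such that for every t > 0 and all x, y, z ∈ ℝ^d: |R(‖x−y‖²/(4t)) − R(‖z−y‖²/(4t))| ≤ (C/√t)·‖x−z‖. -/
namespace KernelLipschitz

variable {R : ℝ → ℝ} {L B t a b : ℝ}

lemma le_two_sqrt_of_sq_div_le_one (ht : 0 < t) (h : a ^ 2 / (4 * t) ≤ 1) : a ≤ 2 * √t := by
  have h4t : a ^ 2 ≤ 4 * t := by rwa [div_le_one (by positivity)] at h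
  calc a ≤ √(4 * t) := Real.le_sqrt_of_sq_le h4t
    _ = 2 * √t := by rw [Real.sqrt_mul zero_le_four, show (4 : ℝ) = 2 ^ 2 by norm_num,
        Real.sqrt_sq zero_le_two]

lemma abs_sq_div_sub_sq_div (ht : 0 < t) (ha : 0 ≤ a) (hb : 0 ≤ b) :
    |a ^ 2 / (4 * t) - b ^ 2 / (4 * t)| = |a - b| * (a + b) / (4 * t) := by
  rw [div_sub_div_same, abs_div, abs_of_pos (by positivity : (0 : ℝ) < 4 * t), sq_sub_sq,
    abs_mul, abs_of_nonneg (add_nonneg ha hb), mul_comm]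

/-- Once `|a - b| ≤ √t`, either both arguments lie outside the support of `R` or
`a + b ≤ 5√t`, which turns the Lipschitz bound on the squares into one on `a - b`. -/
lemma abs_sub_le_of_abs_sub_le_sqrt (hL : 0 ≤ L)
    (hLip : ∀ p q : ℝ, 0 ≤ p → 0 ≤ q → |R p - R q| ≤ L * |p - q|)
    (hsupp : ∀ r : ℝ, 1 < r → R r = 0) (ht : 0 < t) (ha : 0 ≤ a) (hb : 0 ≤ b)
    (hab : |a - b| ≤ √t) :
    |R (a ^ 2 / (4 * t)) - R (b ^ 2 / (4 * t))| ≤ 5 * L / 4 / √t * |a - b| := by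
  by_cases hout : 1 < a ^ 2 / (4 * t) ∧ 1 < b ^ 2 / (4 * t)
  · rw [hsupp _ hout.1, hsupp _ hout.2, sub_zero, abs_zero]
    positivity
  have hsum : a + b ≤ 5 * √t := by
    have := abs_le.mp hab
    rcases not_and_or.mp hout with h | h
    · linarith [le_two_sqrt_of_sq_div_le_one ht (not_lt.mp h)]
    · linarith [le_two_sqrt_of_sq_div_le_one ht (not_lt.mp h)]
  calc |R (a ^ 2 / (4 * t)) - R (b ^ 2 / (4 * t))|
      ≤ L * (|a - b| * (a + b) / (4 * t)) := by
        rw [← abs_sq_div_sub_sq_div ht ha hb]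
        exact hLip _ _ (by positivity) (by positivity)
    _ ≤ L * (|a - b| * (5 * √t) / (4 * √t ^ 2)) := by
        rw [Real.sq_sqrt ht.le]; gcongr
    _ = 5 * L / 4 / √t * |a - b| := by field_simp

lemma abs_sub_le_of_bounded (hbdd : ∀ r : ℝ, 0 ≤ r → |R r| ≤ B) (ht : 0 < t) :
    |R (a ^ 2 / (4 * t)) - R (b ^ 2 / (4 * t))| ≤ 2 * B :=
  calc |R (a ^ 2 / (4 * t)) - R (b ^ 2 / (4 * t))|
      ≤ |R (a ^ 2 / (4 * t))| + |R (b ^ 2 / (4 * t))| := abs_sub _ _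
    _ ≤ B + B := add_le_add (hbdd _ (by positivity)) (hbdd _ (by positivity))
    _ = 2 * B := by ring

lemma abs_sub_le_max_div_sqrt_mul (hL : 0 ≤ L)
    (hLip : ∀ p q : ℝ, 0 ≤ p → 0 ≤ q → |R p - R q| ≤ L * |p - q|)
    (hbdd : ∀ r : ℝ, 0 ≤ r → |R r| ≤ B) (hsupp : ∀ r : ℝ, 1 < r → R r = 0)
    (ht : 0 < t) (ha : 0 ≤ a) (hb : 0 ≤ b) :
    |R (a ^ 2 / (4 * t)) - R (b ^ 2 / (4 * t))| ≤ max (5 * L / 4) (2 * B) / √t * |a - b| := by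
  have hs : 0 < √t := Real.sqrt_pos.mpr ht
  rcases le_or_gt |a - b| √t with hsmall | hlarge
  · calc _ ≤ 5 * L / 4 / √t * |a - b| :=
          abs_sub_le_of_abs_sub_le_sqrt hL hLip hsupp ht ha hb hsmall
      _ ≤ _ := by gcongr; exact le_max_left _ _
  · have hC : 0 ≤ max (5 * L / 4) (2 * B) := le_max_of_le_left (by positivity)
    calc _ ≤ 2 * B := abs_sub_le_of_bounded hbdd ht
      _ ≤ max (5 * L / 4) (2 * B) * 1 := by rw [mul_one]; exact le_max_right _ _
      _ ≤ max (5 * L / 4) (2 * B) * (|a - b| / √t) := by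
          gcongr; exact (one_le_div hs).mpr hlarge.le
      _ = _ := by ring

end KernelLipschitz

open KernelLipschitz in
theorem stmt5_general (d : ℕ) (L B : ℝ) (hL : 0 < L) (R : ℝ → ℝ)
    (hLip : ∀ a b : ℝ, 0 ≤ a → 0 ≤ b → |R a - R b| ≤ L * |a - b|)
    (hbdd : ∀ r : ℝ, 0 ≤ r → |R r| ≤ B)
    (hsupp : ∀ r : ℝ, 1 < r → R r = 0) :
    ∃ C : ℝ, 0 < C ∧ C = max (5 * L / 4) (2 * B) ∧
      ∀ t : ℝ, 0 < t → ∀ x y z : EuclideanSpace ℝ (Fin d),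
        |R (‖x - y‖ ^ 2 / (4 * t)) - R (‖z - y‖ ^ 2 / (4 * t))| ≤
          C / Real.sqrt t * ‖x - z‖ := by
  refine ⟨_, lt_max_of_lt_left (by positivity), rfl, fun t ht x y z => ?_⟩
  have hnorm : |‖x - y‖ - ‖z - y‖| ≤ ‖x - z‖ := by
    simpa using abs_norm_sub_norm_le (x - y) (z - y)
  calc _ ≤ max (5 * L / 4) (2 * B) / √t * |‖x - y‖ - ‖z - y‖| :=
        abs_sub_le_max_div_sqrt_mul hL.le hLip hbdd hsupp ht (norm_nonneg _) (norm_nonneg _)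
    _ ≤ _ := by gcongr

/-- If `R : [0,∞) → ℝ` is `L`-Lipschitz, bounded by `B` and supported in
`[0,1]`, then with `C = max(5L/4, 2B) > 0`, for every `t > 0` and all `x, y, z ∈ ℝ^d`,
`|R(‖x−y‖²/(4t)) − R(‖z−y‖²/(4t))| ≤ (C/√t)·‖x−z‖`. -/
theorem stmt5 (d : ℕ) (L B : ℝ) (hL : 0 < L) (hB : 0 < B) (R : ℝ → ℝ)
    (hLip : ∀ a b : ℝ, 0 ≤ a → 0 ≤ b → |R a - R b| ≤ L * |a - b|)
    (hbdd : ∀ r : ℝ, 0 ≤ r → |R r| ≤ B)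
    (hsupp : ∀ r : ℝ, 1 < r → R r = 0) :
    ∃ C : ℝ, 0 < C ∧ C = max (5 * L / 4) (2 * B) ∧
      ∀ t : ℝ, 0 < t → ∀ x y z : EuclideanSpace ℝ (Fin d),
        |R (‖x - y‖ ^ 2 / (4 * t)) - R (‖z - y‖ ^ 2 / (4 * t))| ≤
          C / Real.sqrt t * ‖x - z‖ :=
  stmt5_general d L B hL R hLip hbdd hsupp
end

section
/- Let R : [0,∞) → ℝ be Lipschitz with constant L, bounded by B, with R(r) = 0 for r > 1, and let C = max(5L/4, 2B). Let M ⊆ ℝ^d, let k ≥ 1 and C₀ > 0, and suppose that for every δ > 0 the set M can be covered by at most (C₀/δ)^k balls of radius δ. Then for every t > 0 and every ε > 0, the family of functions F = { y ↦ R(‖x−y‖²/(4t)) : x ∈ M } admits an ε-net in the uniform norm of cardinality at most (C₀·C/(ε·√t))^k. -/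
/-!
Take the centres `c` of a `δ`-cover of `M` with `δ = ε √t / C` and use the kernels centred at
them as the net. If `2B < ε`, any two kernel values are already within `2B < ε`. Otherwise
`δ ≤ √t`, and for `u = ‖x - y‖`, `v = ‖c - y‖` either both arguments `u² / 4t`, `v² / 4t`
exceed `1` (so both values vanish) or one of `u, v` is at most `2√t`, whence `u + v ≤ 5√t` and
`|u² - v²| ≤ 5√t |u - v|`; the Lipschitz bound then gives `5Lδ / (4√t) = 5Lε / (4C) ≤ ε`.
-/

open Metric

theorem exists_uniform_net_of_subset_iUnion_ball {X Y : Type*} [PseudoMetricSpace X]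
    (F : X → Y → ℝ) {M : Set X} {s : Finset X} {δ ε : ℝ}
    (hs : M ⊆ ⋃ c ∈ s, ball c δ) (hF : ∀ x c, dist x c < δ → ∀ y, |F x y - F c y| ≤ ε) :
    ∃ g : Fin s.card → Y → ℝ, ∀ x ∈ M, ∃ j, ∀ y, |F x y - g j y| ≤ ε := by
  refine ⟨fun j => F (s.equivFin.symm j), fun x hx => ?_⟩
  obtain ⟨c, hc, hxc⟩ := Set.mem_iUnion₂.mp (hs hx)
  exact ⟨s.equivFin ⟨c, hc⟩, by simpa using hF x c hxc⟩

section RadialKernel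

variable {R : ℝ → ℝ} {L B t u v : ℝ}

theorem add_le_five_mul_sqrt (ht : 0 < t) (huv : |u - v| ≤ √t)
    (hsmall : u ^ 2 / (4 * t) ≤ 1 ∨ v ^ 2 / (4 * t) ≤ 1) :
    u + v ≤ 5 * √t := by
  have h4t : (0 : ℝ) < 4 * t := by positivity
  have hsq : (2 * √t) ^ 2 = 4 * t := by rw [mul_pow, Real.sq_sqrt ht.le]; norm_num
  have h2 : 0 ≤ 2 * √t := by positivity
  rw [abs_le] at huv
  rcases hsmall with h | h
  · have : u ≤ 2 * √t := abs_le_of_sq_le_sq' (by rwa [hsq, ← div_le_one h4t]) h2 |>.2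
    linarith
  · have : v ≤ 2 * √t := abs_le_of_sq_le_sq' (by rwa [hsq, ← div_le_one h4t]) h2 |>.2
    linarith

theorem abs_sub_comp_sq_div_le (hL : 0 ≤ L)
    (hLip : ∀ a b : ℝ, 0 ≤ a → 0 ≤ b → |R a - R b| ≤ L * |a - b|)
    (hsupp : ∀ r : ℝ, 1 < r → R r = 0) (ht : 0 < t) (hu : 0 ≤ u) (hv : 0 ≤ v)
    (huv : |u - v| ≤ √t) :
    |R (u ^ 2 / (4 * t)) - R (v ^ 2 / (4 * t))| ≤ 5 * L * |u - v| / (4 * √t) := by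
  have hst : 0 < √t := Real.sqrt_pos.mpr ht
  by_cases hlarge : 1 < u ^ 2 / (4 * t) ∧ 1 < v ^ 2 / (4 * t)
  · rw [hsupp _ hlarge.1, hsupp _ hlarge.2, sub_self, abs_zero]
    positivity
  have hsum : u + v ≤ 5 * √t := add_le_five_mul_sqrt ht huv (by
    rw [not_and_or, not_lt, not_lt] at hlarge; exact hlarge)
  have hsq : |u ^ 2 - v ^ 2| ≤ 5 * √t * |u - v| := by
    rw [sq_sub_sq, abs_mul, abs_of_nonneg (by positivity : 0 ≤ u + v)]
    gcongr
  calc |R (u ^ 2 / (4 * t)) - R (v ^ 2 / (4 * t))|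
      ≤ L * |u ^ 2 / (4 * t) - v ^ 2 / (4 * t)| := hLip _ _ (by positivity) (by positivity)
    _ = L * |u ^ 2 - v ^ 2| / (4 * t) := by
      rw [← sub_div, abs_div, abs_of_pos (by positivity : (0 : ℝ) < 4 * t), mul_div_assoc]
    _ ≤ L * (5 * √t * |u - v|) / (4 * t) := by gcongr
    _ = 5 * L * |u - v| / (4 * √t) := by
      field_simp
      rw [Real.sq_sqrt ht.le]
      ring

theorem abs_sub_comp_sq_div_le_of_abs_sub_le (hL : 0 ≤ L)
    (hLip : ∀ a b : ℝ, 0 ≤ a → 0 ≤ b → |R a - R b| ≤ L * |a - b|)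
    (hbdd : ∀ r : ℝ, 0 ≤ r → |R r| ≤ B) (hsupp : ∀ r : ℝ, 1 < r → R r = 0)
    (ht : 0 < t) (hu : 0 ≤ u) (hv : 0 ≤ v) {ε : ℝ} (hε : 0 < ε)
    (huv : |u - v| ≤ ε * √t / max (5 * L / 4) (2 * B)) :
    |R (u ^ 2 / (4 * t)) - R (v ^ 2 / (4 * t))| ≤ ε := by
  set C := max (5 * L / 4) (2 * B)
  rcases lt_or_ge (2 * B) ε with hεB | hεB
  · linarith [abs_sub (R (u ^ 2 / (4 * t))) (R (v ^ 2 / (4 * t))),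
      hbdd (u ^ 2 / (4 * t)) (by positivity), hbdd (v ^ 2 / (4 * t)) (by positivity)]
  have hεC : ε ≤ C := hεB.trans (le_max_right _ _)
  have hC : 0 < C := hε.trans_le hεC
  have hst : 0 < √t := Real.sqrt_pos.mpr ht
  have huv' : |u - v| ≤ √t :=
    huv.trans (div_le_of_le_mul₀ hC.le hst.le (by rw [mul_comm]; gcongr))
  calc |R (u ^ 2 / (4 * t)) - R (v ^ 2 / (4 * t))|
      ≤ 5 * L * |u - v| / (4 * √t) := abs_sub_comp_sq_div_le hL hLip hsupp ht hu hv huv'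
    _ ≤ 5 * L * (ε * √t / C) / (4 * √t) := by gcongr
    _ = 5 * L / 4 / C * ε := by field_simp
    _ ≤ ε := mul_le_of_le_one_left hε.le ((div_le_one hC).mpr (le_max_left _ _))

end RadialKernel

theorem stmt6_general (d k : ℕ) (L B C₀ : ℝ) (hL : 0 < L)
    (R : ℝ → ℝ)
    (hLip : ∀ a b : ℝ, 0 ≤ a → 0 ≤ b → |R a - R b| ≤ L * |a - b|)
    (hbdd : ∀ r : ℝ, 0 ≤ r → |R r| ≤ B)
    (hsupp : ∀ r : ℝ, 1 < r → R r = 0)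
    (M : Set (EuclideanSpace ℝ (Fin d)))
    (hcover : ∀ δ : ℝ, 0 < δ → ∃ s : Finset (EuclideanSpace ℝ (Fin d)),
      (s.card : ℝ) ≤ (C₀ / δ) ^ k ∧ M ⊆ ⋃ c ∈ s, Metric.ball c δ) :
    ∀ t ε : ℝ, 0 < t → 0 < ε →
      ∃ (m : ℕ) (g : Fin m → EuclideanSpace ℝ (Fin d) → ℝ),
        (m : ℝ) ≤ (C₀ * max (5 * L / 4) (2 * B) / (ε * Real.sqrt t)) ^ k ∧
        ∀ x ∈ M, ∃ j : Fin m, ∀ y : EuclideanSpace ℝ (Fin d),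
          |R (‖x - y‖ ^ 2 / (4 * t)) - g j y| ≤ ε := by
  intro t ε ht hε
  have hC : 0 < max (5 * L / 4) (2 * B) := lt_max_of_lt_left (by positivity)
  have hδ : 0 < ε * √t / max (5 * L / 4) (2 * B) := by
    have := Real.sqrt_pos.mpr ht
    positivity
  obtain ⟨s, hcard, hs⟩ := hcover _ hδ
  obtain ⟨g, hg⟩ := exists_uniform_net_of_subset_iUnion_ball
    (fun x y => R (‖x - y‖ ^ 2 / (4 * t))) hs fun x c hxc y => by
      refine abs_sub_comp_sq_div_le_of_abs_sub_le hL.le hLip hbdd hsupp ht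
        (norm_nonneg _) (norm_nonneg _) hε ?_
      rw [← dist_eq_norm, ← dist_eq_norm]
      exact (abs_dist_sub_le x c y).trans hxc.le
  exact ⟨s.card, g, by rwa [div_div_eq_mul_div] at hcard, hg⟩

/-- (Covering number of the kernel family.)  Let `R : [0,∞) → ℝ` be
`L`-Lipschitz, bounded by `B`, supported in `[0,1]`, and `C = max(5L/4, 2B)`.  If
`M ⊆ ℝ^d` can be covered by at most `(C₀/δ)^k` balls of radius `δ` for every `δ > 0`,
then for every `t > 0` and `ε > 0` the family `{ y ↦ R(‖x−y‖²/(4t)) : x ∈ M }` admits an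
`ε`-net in the uniform norm of cardinality at most `(C₀·C/(ε·√t))^k`. -/
theorem stmt6 (d k : ℕ) (hk : 1 ≤ k) (L B C₀ : ℝ) (hL : 0 < L) (hB : 0 < B)
    (hC₀ : 0 < C₀) (R : ℝ → ℝ)
    (hLip : ∀ a b : ℝ, 0 ≤ a → 0 ≤ b → |R a - R b| ≤ L * |a - b|)
    (hbdd : ∀ r : ℝ, 0 ≤ r → |R r| ≤ B)
    (hsupp : ∀ r : ℝ, 1 < r → R r = 0)
    (M : Set (EuclideanSpace ℝ (Fin d)))
    (hcover : ∀ δ : ℝ, 0 < δ → ∃ s : Finset (EuclideanSpace ℝ (Fin d)),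
      (s.card : ℝ) ≤ (C₀ / δ) ^ k ∧ M ⊆ ⋃ c ∈ s, Metric.ball c δ) :
    ∀ t ε : ℝ, 0 < t → 0 < ε →
      ∃ (m : ℕ) (g : Fin m → EuclideanSpace ℝ (Fin d) → ℝ),
        (m : ℝ) ≤ (C₀ * max (5 * L / 4) (2 * B) / (ε * Real.sqrt t)) ^ k ∧
        ∀ x ∈ M, ∃ j : Fin m, ∀ y : EuclideanSpace ℝ (Fin d),
          |R (‖x - y‖ ^ 2 / (4 * t)) - g j y| ≤ ε :=
  stmt6_general d k L B C₀ hL R hLip hbdd hsupp M hcover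
end

section
/- Let n ≥ 1, let t > 0, c > 0, W > 0, let A and B be symmetric n×n real matrices with nonnegative entries such that (1/n)∑_{j=1}^n B_{ij} ≤ W for every i, and suppose that for every v ∈ ℝⁿ with ∑_i v_i = 0 one has (1/(n²·t))·∑_{i,j} A_{ij}(v_i−v_j)² ≥ (c/n)·∑_i v_i². If u ∈ ℝⁿ satisfies ∑_i u_i = 0 and (1/(n·t))·∑_{j=1}^n A_{ij}(u_i−u_j) = (1/n)·∑_{j=1}^n B_{ij} f_j for every i, where f ∈ ℝⁿ, then ((1/n)∑_i u_i²)^{1/2} ≤ (2W/c)·((1/n)∑_j f_j²)^{1/2}. -/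
/-!
Testing the equation against `u` and using the symmetry of `A` turns the Dirichlet energy
`∑ A i j (u i - u j)²` into `2 t ⟪u, B f⟫`, so the Poincaré inequality gives
`c ‖u‖² ≤ (2/n) ⟪u, B f⟫`. Since `B` is symmetric with row sums at most `n W`, the Schur
test bounds `⟪u, B f⟫` by `n W ‖u‖ ‖f‖`, whence `c ‖u‖ ≤ 2 W ‖f‖`.
-/

open Finset

variable {ι : Type*} [Fintype ι]

theorem Matrix.IsSymm.sum_sum_mul_sub_sq {R : Type*} [CommRing R] {A : Matrix ι ι R}
    (hA : A.IsSymm) (v : ι → R) :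
    ∑ i, ∑ j, A i j * (v i - v j) ^ 2 = 2 * ∑ i, v i * ∑ j, A i j * (v i - v j) := by
  have hswap :
      ∑ i, ∑ j, A i j * (v j * (v j - v i)) = ∑ i, ∑ j, A i j * (v i * (v i - v j)) := by
    rw [sum_comm]
    simp_rw [hA.apply]
  calc ∑ i, ∑ j, A i j * (v i - v j) ^ 2
      = ∑ i, ∑ j, A i j * (v i * (v i - v j)) + ∑ i, ∑ j, A i j * (v j * (v j - v i)) := by
        simp_rw [← sum_add_distrib]
        congr! 2 with i - j -
        ring
    _ = 2 * ∑ i, v i * ∑ j, A i j * (v i - v j) := by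
        simp_rw [hswap, ← two_mul, mul_sum, mul_left_comm (v _)]

/- The Schur test: Cauchy–Schwarz with weights `B i j`, then row sums for `u` and column sums
for `f`. -/
theorem sq_sum_mul_sum_mul_le_of_sum_le {B : ι → ι → ℝ} (hB : ∀ i j, 0 ≤ B i j)
    {R R' : ℝ} (hrow : ∀ i, ∑ j, B i j ≤ R) (hcol : ∀ j, ∑ i, B i j ≤ R') (u f : ι → ℝ) :
    (∑ i, u i * ∑ j, B i j * f j) ^ 2 ≤ R * R' * ((∑ i, u i ^ 2) * ∑ j, f j ^ 2) := by
  have hBsq (i j : ι) (x : ℝ) : 0 ≤ B i j * x ^ 2 := mul_nonneg (hB i j) (sq_nonneg x)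
  have hcs : (∑ i, u i * ∑ j, B i j * f j) ^ 2
      ≤ (∑ i, ∑ j, B i j * u i ^ 2) * ∑ i, ∑ j, B i j * f j ^ 2 := by
    have := sum_sq_le_sum_mul_sum_of_sq_le_mul (univ : Finset (ι × ι))
      (r := fun p => u p.1 * (B p.1 p.2 * f p.2)) (f := fun p => B p.1 p.2 * u p.1 ^ 2)
      (g := fun p => B p.1 p.2 * f p.2 ^ 2) (fun p _ => hBsq _ _ _)
      (fun p _ => hBsq _ _ _) fun p _ => le_of_eq (by ring)
    simpa only [Fintype.sum_prod_type, ← mul_sum] using this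
  have hu : ∑ i, ∑ j, B i j * u i ^ 2 ≤ R * ∑ i, u i ^ 2 := by
    rw [mul_sum]
    gcongr with i
    rw [← sum_mul]
    exact mul_le_mul_of_nonneg_right (hrow i) (sq_nonneg _)
  have hf : ∑ i, ∑ j, B i j * f j ^ 2 ≤ R' * ∑ j, f j ^ 2 := by
    rw [sum_comm, mul_sum]
    gcongr with j
    rw [← sum_mul]
    exact mul_le_mul_of_nonneg_right (hcol j) (sq_nonneg _)
  have hu₀ : 0 ≤ ∑ i, ∑ j, B i j * u i ^ 2 := sum_nonneg fun i _ => sum_nonneg fun j _ => hBsq ..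
  have hf₀ : 0 ≤ ∑ i, ∑ j, B i j * f j ^ 2 := sum_nonneg fun i _ => sum_nonneg fun j _ => hBsq ..
  calc _ ≤ _ := hcs
    _ ≤ (R * ∑ i, u i ^ 2) * (R' * ∑ j, f j ^ 2) := mul_le_mul hu hf hf₀ (hu₀.trans hu)
    _ = _ := by ring

theorem sqrt_le_div_mul_sqrt_of_mul_le_of_sq_le {a b c x K : ℝ} (hc : 0 < c) (hK : 0 ≤ K)
    (ha : 0 ≤ a) (hax : c * a ≤ x) (hx : x ^ 2 ≤ K ^ 2 * (a * b)) :
    √a ≤ K / c * √b := by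
  rcases ha.eq_or_lt with rfl | hpos
  · rw [Real.sqrt_zero]
    positivity
  have hsq : (c * a) ^ 2 ≤ K ^ 2 * (a * b) := (pow_le_pow_left₀ (by positivity) hax 2).trans hx
  have hab : a ≤ (K / c) ^ 2 * b := by
    rw [div_pow, div_mul_eq_mul_div, le_div_iff₀ (by positivity)]
    exact le_of_mul_le_mul_right (by linear_combination hsq) hpos
  calc √a ≤ √((K / c) ^ 2 * b) := Real.sqrt_le_sqrt hab
    _ = K / c * √b := by rw [Real.sqrt_mul (sq_nonneg _), Real.sqrt_sq (by positivity)]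

theorem stmt9_general (n : ℕ) (hn : 1 ≤ n) (t c W : ℝ) (ht : 0 < t) (hc : 0 < c) (hW : 0 < W)
    (A B : Matrix (Fin n) (Fin n) ℝ) (hAsymm : A.IsSymm) (hBsymm : B.IsSymm)
    (hB0 : ∀ i j, 0 ≤ B i j)
    (hBrow : ∀ i, (1 / (n : ℝ)) * ∑ j, B i j ≤ W)
    (hPoincare : ∀ v : Fin n → ℝ, (∑ i, v i) = 0 →
      (c / n) * ∑ i, (v i) ^ 2 ≤
        (1 / ((n : ℝ) ^ 2 * t)) * ∑ i, ∑ j, A i j * (v i - v j) ^ 2)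
    (u f : Fin n → ℝ) (hu0 : (∑ i, u i) = 0)
    (heq : ∀ i, (1 / ((n : ℝ) * t)) * ∑ j, A i j * (u i - u j) =
      (1 / (n : ℝ)) * ∑ j, B i j * f j) :
    Real.sqrt ((1 / (n : ℝ)) * ∑ i, (u i) ^ 2) ≤
      (2 * W / c) * Real.sqrt ((1 / (n : ℝ)) * ∑ j, (f j) ^ 2) := by
  have hN : (0 : ℝ) < n := by exact_mod_cast hn
  set Su := ∑ i, u i ^ 2
  set Sf := ∑ j, f j ^ 2
  set X := ∑ i, u i * ∑ j, B i j * f j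
  have hrow (i : Fin n) : ∑ j, B i j ≤ n * W := by
    simpa only [one_div, inv_mul_le_iff₀ hN] using hBrow i
  have hAu (i : Fin n) : ∑ j, A i j * (u i - u j) = t * ∑ j, B i j * f j := by
    have := heq i
    field_simp at this
    linarith
  have hcoercive : c * Su ≤ 2 / n * X := by
    have := hPoincare u hu0
    simp_rw [hAsymm.sum_sum_mul_sub_sq, hAu, mul_left_comm (u _) t, ← mul_sum] at this
    have hrhs : 1 / ((n : ℝ) ^ 2 * t) * (2 * (t * X)) = 2 / n * X / n := by field_simp
    rwa [hrhs, div_mul_eq_mul_div, div_le_div_iff_of_pos_right hN] at this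
  have hschur : X ^ 2 ≤ n * W * (n * W) * (Su * Sf) :=
    sq_sum_mul_sum_mul_le_of_sum_le hB0 hrow (fun j => by simpa only [hBsymm.apply] using hrow j)
      u f
  have hsq : (2 / n * X) ^ 2 ≤ (2 * W) ^ 2 * (Su * Sf) := calc
    (2 / n * X) ^ 2 = (2 / n) ^ 2 * X ^ 2 := by ring
    _ ≤ (2 / n) ^ 2 * (n * W * (n * W) * (Su * Sf)) := by gcongr
    _ = (2 * W) ^ 2 * (Su * Sf) := by field_simp
  have hsqrt : √Su ≤ 2 * W / c * √Sf :=
    sqrt_le_div_mul_sqrt_of_mul_le_of_sq_le hc (by positivity) (sum_nonneg fun i _ => sq_nonneg _)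
      hcoercive hsq
  rw [Real.sqrt_mul (by positivity), Real.sqrt_mul (by positivity), mul_left_comm]
  gcongr

/-- (Discrete stability estimate, Theorem `thm:bound_solution_bfu`.)
Let `A`, `B` be symmetric `n×n` matrices with nonnegative entries, with row averages of
`B` bounded by `W`, and suppose the discrete Poincaré inequality
`(1/(n²t))·∑_{i,j} A_{ij}(v_i−v_j)² ≥ (c/n)·∑_i v_i²` holds for all mean-zero `v`.
If `u` is mean-zero and solves `(1/(nt))∑_j A_{ij}(u_i−u_j) = (1/n)∑_j B_{ij} f_j`,
then `((1/n)∑ u_i²)^{1/2} ≤ (2W/c)·((1/n)∑ f_j²)^{1/2}`. -/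
theorem stmt9 (n : ℕ) (hn : 1 ≤ n) (t c W : ℝ) (ht : 0 < t) (hc : 0 < c) (hW : 0 < W)
    (A B : Matrix (Fin n) (Fin n) ℝ) (hAsymm : A.IsSymm) (hBsymm : B.IsSymm)
    (hA0 : ∀ i j, 0 ≤ A i j) (hB0 : ∀ i j, 0 ≤ B i j)
    (hBrow : ∀ i, (1 / (n : ℝ)) * ∑ j, B i j ≤ W)
    (hPoincare : ∀ v : Fin n → ℝ, (∑ i, v i) = 0 →
      (c / n) * ∑ i, (v i) ^ 2 ≤
        (1 / ((n : ℝ) ^ 2 * t)) * ∑ i, ∑ j, A i j * (v i - v j) ^ 2)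
    (u f : Fin n → ℝ) (hu0 : (∑ i, u i) = 0)
    (heq : ∀ i, (1 / ((n : ℝ) * t)) * ∑ j, A i j * (u i - u j) =
      (1 / (n : ℝ)) * ∑ j, B i j * f j) :
    Real.sqrt ((1 / (n : ℝ)) * ∑ i, (u i) ^ 2) ≤
      (2 * W / c) * Real.sqrt ((1 / (n : ℝ)) * ∑ j, (f j) ^ 2) :=
  stmt9_general n hn t c W ht hc hW A B hAsymm hBsymm hB0 hBrow hPoincare u f hu0 heq
end

section
/- Let δ₀ > 0 and B > 0, and let R : [0,∞) → [0,B] be measurable with R(r) = 0 for all r > 1 and R(r) ≥ δ₀ for all 0 ≤ r ≤ 1/2. Let μ be a finite measure on ℝ^d, let t > 0 and t' = t/18. Then for all points x_i, x_j ∈ ℝ^d: ∬ R(‖x−x_i‖²/(4t'))·R(‖x_j−y‖²/(4t'))·R(‖x−y‖²/(4t')) dμ(x)dμ(y) ≤ (B³·μ(ℝ^d)²/δ₀)·R(‖x_i−x_j‖²/(4t)). -/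
open MeasureTheory

/-!
If the three points `x_i, x_j` and the integration variables `a, b` give a nonzero integrand,
then `‖a - x_i‖², ‖a - b‖², ‖x_j - b‖² ≤ 4t'`, so by the triangle inequality
`‖x_i - x_j‖² ≤ 9 · 4t' = 2t` and `R(‖x_i - x_j‖²/(4t)) ≥ δ₀`. Hence either the integrand vanishes
identically, or the trivial bound `B³ μ(ℝ^d)²` is at most `(B³ μ(ℝ^d)²/δ₀) R(‖x_i - x_j‖²/(4t))`.
-/

theorem norm_sub_sq_le_nine_mul_of_sq_le {E : Type*} [SeminormedAddCommGroup E]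
    {xi xj a b : E} {s : ℝ} (ha : ‖a - xi‖ ^ 2 ≤ s) (hab : ‖a - b‖ ^ 2 ≤ s)
    (hb : ‖xj - b‖ ^ 2 ≤ s) : ‖xi - xj‖ ^ 2 ≤ 9 * s := by
  have htri : ‖xi - xj‖ ≤ ‖a - xi‖ + ‖a - b‖ + ‖xj - b‖ :=
    calc ‖xi - xj‖ ≤ ‖xi - a‖ + ‖a - b‖ + ‖b - xj‖ := by
          simpa only [dist_eq_norm] using dist_triangle4 xi a b xj
      _ = ‖a - xi‖ + ‖a - b‖ + ‖xj - b‖ := by rw [norm_sub_rev xi a, norm_sub_rev b xj]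
  nlinarith [norm_nonneg (xi - xj), norm_nonneg (a - xi), norm_nonneg (a - b),
    norm_nonneg (xj - b), sq_nonneg (‖a - xi‖ - ‖a - b‖), sq_nonneg (‖a - xi‖ - ‖xj - b‖),
    sq_nonneg (‖a - b‖ - ‖xj - b‖)]

theorem kernel_mul_kernel_mul_kernel_eq_zero {E : Type*} [SeminormedAddCommGroup E]
    {R : ℝ → ℝ} (hsupp : ∀ r : ℝ, 1 < r → R r = 0) {s : ℝ} (hs : 0 < s)
    {xi xj : E} (hfar : 9 * s < ‖xi - xj‖ ^ 2) (a b : E) :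
    R (‖a - xi‖ ^ 2 / s) * R (‖xj - b‖ ^ 2 / s) * R (‖a - b‖ ^ 2 / s) = 0 := by
  by_contra hne
  have hle : ∀ {v : E}, R (‖v‖ ^ 2 / s) ≠ 0 → ‖v‖ ^ 2 ≤ s := fun hv =>
    (div_le_one hs).1 (not_lt.1 (mt (hsupp _) hv))
  simp only [mul_ne_zero_iff] at hne
  obtain ⟨⟨ha, hb⟩, hab⟩ := hne
  exact hfar.not_ge (norm_sub_sq_le_nine_mul_of_sq_le (hle ha) (hle hab) (hle hb))

theorem abs_mul_mul_le_pow_three {x y z B : ℝ} (hx₀ : 0 ≤ x) (hxB : x ≤ B)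
    (hy₀ : 0 ≤ y) (hyB : y ≤ B) (hz₀ : 0 ≤ z) (hzB : z ≤ B) : |x * y * z| ≤ B ^ 3 := by
  rw [abs_of_nonneg (by positivity), pow_three, ← mul_assoc]
  have hB : 0 ≤ B := hx₀.trans hxB
  gcongr

theorem integral_integral_le_of_abs_le {α β : Type*} [MeasurableSpace α] [MeasurableSpace β]
    {μ : Measure α} {ν : Measure β} [IsFiniteMeasure μ] [IsFiniteMeasure ν]
    {f : α → β → ℝ} {C : ℝ} (hf : ∀ a b, |f a b| ≤ C) :
    ∫ a, ∫ b, f a b ∂ν ∂μ ≤ C * ν.real Set.univ * μ.real Set.univ := by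
  refine (Real.le_norm_self _).trans (norm_integral_le_of_norm_le_const (.of_forall fun a => ?_))
  exact norm_integral_le_of_norm_le_const (.of_forall (hf a))

theorem stmt11_general (d : ℕ) (δ₀ B : ℝ) (hδ₀ : 0 < δ₀) (hB : 0 < B)
    (R : ℝ → ℝ) (hR0 : ∀ r : ℝ, 0 ≤ r → 0 ≤ R r) (hRB : ∀ r : ℝ, 0 ≤ r → R r ≤ B)
    (hsupp : ∀ r : ℝ, 1 < r → R r = 0)
    (hlow : ∀ r : ℝ, 0 ≤ r → r ≤ 1 / 2 → δ₀ ≤ R r)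
    (μ : Measure (EuclideanSpace ℝ (Fin d))) [IsFiniteMeasure μ]
    (t : ℝ) (ht : 0 < t) (xi xj : EuclideanSpace ℝ (Fin d)) :
    (∫ a, ∫ b, R (‖a - xi‖ ^ 2 / (4 * (t / 18))) * R (‖xj - b‖ ^ 2 / (4 * (t / 18))) *
        R (‖a - b‖ ^ 2 / (4 * (t / 18))) ∂μ ∂μ) ≤
      (B ^ 3 * ((μ Set.univ).toReal) ^ 2 / δ₀) * R (‖xi - xj‖ ^ 2 / (4 * t)) := by
  have hR : 0 ≤ R (‖xi - xj‖ ^ 2 / (4 * t)) := hR0 _ (by positivity)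
  by_cases hclose : ‖xi - xj‖ ^ 2 / (4 * t) ≤ 1 / 2
  · calc _ ≤ B ^ 3 * μ.real Set.univ * μ.real Set.univ :=
          integral_integral_le_of_abs_le fun a b => abs_mul_mul_le_pow_three
            (hR0 _ (by positivity)) (hRB _ (by positivity))
            (hR0 _ (by positivity)) (hRB _ (by positivity))
            (hR0 _ (by positivity)) (hRB _ (by positivity))
      _ = (B ^ 3 * ((μ Set.univ).toReal) ^ 2 / δ₀) * δ₀ := by
          rw [measureReal_def]; field_simp
      _ ≤ _ := by gcongr; exact hlow _ (by positivity) hclose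
  · have hfar : 9 * (4 * (t / 18)) < ‖xi - xj‖ ^ 2 := by
      rw [not_le, lt_div_iff₀ (by positivity)] at hclose
      linarith
    simp only [kernel_mul_kernel_mul_kernel_eq_zero hsupp (by positivity) hfar, integral_zero]
    positivity

/-- (Triple-kernel bound.)  If `R : [0,∞) → [0,B]` is supported in
`[0,1]` and `R ≥ δ₀` on `[0,1/2]`, `μ` is a finite measure on `ℝ^d`, `t > 0` and
`t' = t/18`, then for all `x_i, x_j`,
`∬ R(‖x−x_i‖²/(4t'))·R(‖x_j−y‖²/(4t'))·R(‖x−y‖²/(4t')) dμ(x)dμ(y)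
  ≤ (B³·μ(ℝ^d)²/δ₀)·R(‖x_i−x_j‖²/(4t))`. -/
theorem stmt11 (d : ℕ) (δ₀ B : ℝ) (hδ₀ : 0 < δ₀) (hB : 0 < B)
    (R : ℝ → ℝ) (hRmeas : Measurable R)
    (hR0 : ∀ r : ℝ, 0 ≤ r → 0 ≤ R r) (hRB : ∀ r : ℝ, 0 ≤ r → R r ≤ B)
    (hsupp : ∀ r : ℝ, 1 < r → R r = 0)
    (hlow : ∀ r : ℝ, 0 ≤ r → r ≤ 1 / 2 → δ₀ ≤ R r)
    (μ : Measure (EuclideanSpace ℝ (Fin d))) [IsFiniteMeasure μ]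
    (t : ℝ) (ht : 0 < t) (xi xj : EuclideanSpace ℝ (Fin d)) :
    (∫ a, ∫ b, R (‖a - xi‖ ^ 2 / (4 * (t / 18))) * R (‖xj - b‖ ^ 2 / (4 * (t / 18))) *
        R (‖a - b‖ ^ 2 / (4 * (t / 18))) ∂μ ∂μ) ≤
      (B ^ 3 * ((μ Set.univ).toReal) ^ 2 / δ₀) * R (‖xi - xj‖ ^ 2 / (4 * t)) :=
  stmt11_general d δ₀ B hδ₀ hB R hR0 hRB hsupp hlow μ t ht xi xj
end

section
/- Let R : [0,∞) → [0,∞) be measurable and integrable, and set R̄(r) = ∫_r^∞ R(s) ds. Fix t > 0, C_t > 0, points x_1, …, x_n ∈ ℝ^d, and write R_t(x,y) = C_t·R(‖x−y‖²/(4t)) and R̄_t(x,y) = C_t·R̄(‖x−y‖²/(4t)). Let w(x) = (1/n)∑_{j=1}^n R_t(x,x_j) and assume w(x_i) ≠ 0 for every i. Let u : ℝ^d → ℝ, let λ ∈ ℝ with λ ≠ 0, and let v ∈ ℝⁿ satisfy: (a) (1/(n·t))·∑_{j=1}^n R_t(x_i,x_j)(v_i−v_j) = (1/n)·∑_{j=1}^n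 R̄_t(x_i,x_j)·u(x_j) for every i, and (b) (1/(n·w(x_i)))·∑_{j=1}^n R_t(x_i,x_j)·v_j + (t/(n·w(x_i)))·∑_{j=1}^n R̄_t(x_i,x_j)·u(x_j) = λ·u(x_i) for every i. Then v_i = λ·u(x_i) for every i, and the vector (u(x_1),…,u(x_n)) satisfies the discrete eigenvalue problem (1/t)·∑_{j=1}^n R_t(x_i,x_j)·(u(x_i)−u(x_j)) = (1/λ)·∑_{j=1}^n R̄_t(x_i,x_j)·u(x_j) for every i. -/
open MeasureTheory

/-- `R̄(r) = ∫_r^∞ R(s) ds`. -/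
noncomputable def Rbar (R : ℝ → ℝ) (r : ℝ) : ℝ := ∫ s in Set.Ioi r, R s

/-- The kernel `R_t(a,b) = C_t·R(‖a−b‖²/(4t))`. -/
noncomputable def Rt {d : ℕ} (R : ℝ → ℝ) (Ct t : ℝ)
    (a b : EuclideanSpace ℝ (Fin d)) : ℝ :=
  Ct * R (‖a - b‖ ^ 2 / (4 * t))

/-- The kernel `R̄_t(a,b) = C_t·R̄(‖a−b‖²/(4t))`. -/
noncomputable def Rbart {d : ℕ} (R : ℝ → ℝ) (Ct t : ℝ)
    (a b : EuclideanSpace ℝ (Fin d)) : ℝ :=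
  Ct * Rbar R (‖a - b‖ ^ 2 / (4 * t))

/-- The empirical degree function `w(a) = (1/n)∑_j R_t(a,x_j)`. -/
noncomputable def degW {d : ℕ} (R : ℝ → ℝ) (Ct t : ℝ) (n : ℕ)
    (x : Fin n → EuclideanSpace ℝ (Fin d)) (a : EuclideanSpace ℝ (Fin d)) : ℝ :=
  (1 / (n : ℝ)) * ∑ j, Rt R Ct t a (x j)

/-! The two relations at a sample point `x i` are linear in the three row sums
`S = ∑ⱼ R_t(x_i,x_j) = n·w(x_i)`, `A = ∑ⱼ R_t(x_i,x_j) v_j` and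
`B = ∑ⱼ R̄_t(x_i,x_j) u(x_j)`: (a) reads `v_i S − A = t B` and (b) reads
`A + t B = λ u(x_i) S`, so adding them gives `v_i S = λ u(x_i) S`. -/

theorem Finset.sum_mul_const_sub {ι α : Type*} [CommRing α] (s : Finset ι) (K f : ι → α)
    (c : α) :
    ∑ j ∈ s, K j * (c - f j) = c * ∑ j ∈ s, K j - ∑ j ∈ s, K j * f j := by
  rw [Finset.mul_sum, ← Finset.sum_sub_distrib]
  exact Finset.sum_congr rfl fun j _ => by ring

theorem eq_of_row_relations {K : Type*} [Field K] {N t S A B c μ : K} (hN : N ≠ 0)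
    (ht : t ≠ 0) (hS : S ≠ 0) (ha : 1 / (N * t) * (c * S - A) = 1 / N * B)
    (hb : 1 / S * A + t / S * B = μ) : c = μ := by
  field_simp at ha hb
  have hS' : c * S = μ * S := by linear_combination ha + hb
  exact mul_right_cancel₀ hS hS'

theorem eq_one_div_mul_of_row_relation {K : Type*} [Field K] {N t L B μ : K} (hN : N ≠ 0)
    (hμ : μ ≠ 0) (h : 1 / (N * t) * (μ * L) = 1 / N * B) : 1 / t * L = 1 / μ * B := by
  field_simp at h ⊢
  linear_combination h

theorem card_mul_degW {d n : ℕ} (R : ℝ → ℝ) (Ct t : ℝ)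
    (x : Fin n → EuclideanSpace ℝ (Fin d)) (a : EuclideanSpace ℝ (Fin d))
    (hn : (n : ℝ) ≠ 0) :
    (n : ℝ) * degW R Ct t n x a = ∑ j, Rt R Ct t a (x j) := by
  rw [degW, ← mul_assoc, mul_one_div_cancel hn, one_mul]

theorem stmt12_general (d n : ℕ) (R : ℝ → ℝ)
    (t Ct : ℝ) (ht : 0 < t)
    (x : Fin n → EuclideanSpace ℝ (Fin d))
    (hw : ∀ i, degW R Ct t n x (x i) ≠ 0)
    (u : EuclideanSpace ℝ (Fin d) → ℝ) (lam : ℝ) (hlam : lam ≠ 0)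
    (v : Fin n → ℝ)
    (ha : ∀ i, (1 / ((n : ℝ) * t)) * ∑ j, Rt R Ct t (x i) (x j) * (v i - v j) =
      (1 / (n : ℝ)) * ∑ j, Rbart R Ct t (x i) (x j) * u (x j))
    (hb : ∀ i, (1 / ((n : ℝ) * degW R Ct t n x (x i))) *
        (∑ j, Rt R Ct t (x i) (x j) * v j) +
      (t / ((n : ℝ) * degW R Ct t n x (x i))) *
        (∑ j, Rbart R Ct t (x i) (x j) * u (x j)) = lam * u (x i)) :
    (∀ i, v i = lam * u (x i)) ∧
    (∀ i, (1 / t) * ∑ j, Rt R Ct t (x i) (x j) * (u (x i) - u (x j)) =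
      (1 / lam) * ∑ j, Rbart R Ct t (x i) (x j) * u (x j)) := by
  have hv : ∀ i, v i = lam * u (x i) := by
    intro i
    have hn : (n : ℝ) ≠ 0 := Nat.cast_ne_zero.mpr i.pos.ne'
    have hS : (n : ℝ) * degW R Ct t n x (x i) ≠ 0 := mul_ne_zero hn (hw i)
    have ha' := ha i
    have hb' := hb i
    rw [card_mul_degW R Ct t x (x i) hn] at hS hb'
    rw [Finset.sum_mul_const_sub] at ha'
    exact eq_of_row_relations hn ht.ne' hS ha' hb'
  refine ⟨hv, fun i => ?_⟩
  refine eq_one_div_mul_of_row_relation (Nat.cast_ne_zero.mpr i.pos.ne') hlam ?_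
  rw [Finset.mul_sum, ← ha i]
  congr 2 with j
  rw [hv i, hv j]
  ring

/-- (Proposition `prop:eigen_intergral_dis`, part 1.)  If `u` is an
eigenfunction of `T_{t,n}` with eigenvalue `λ ≠ 0` — i.e. `(v, u)` satisfies the discrete
system (a) and the eigen-relation (b) at the sample points — then `v_i = λ·u(x_i)` for
every `i`, and the restriction of `u` to the sample points is an eigenvector of the
discrete eigenvalue problem with eigenvalue `1/λ`. -/
theorem stmt12 (d n : ℕ) (R : ℝ → ℝ) (hRmeas : Measurable R)
    (hR0 : ∀ r : ℝ, 0 ≤ R r) (hRint : IntegrableOn R (Set.Ioi (0 : ℝ)))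
    (t Ct : ℝ) (ht : 0 < t) (hCt : 0 < Ct)
    (x : Fin n → EuclideanSpace ℝ (Fin d))
    (hw : ∀ i, degW R Ct t n x (x i) ≠ 0)
    (u : EuclideanSpace ℝ (Fin d) → ℝ) (lam : ℝ) (hlam : lam ≠ 0)
    (v : Fin n → ℝ)
    (ha : ∀ i, (1 / ((n : ℝ) * t)) * ∑ j, Rt R Ct t (x i) (x j) * (v i - v j) =
      (1 / (n : ℝ)) * ∑ j, Rbart R Ct t (x i) (x j) * u (x j))
    (hb : ∀ i, (1 / ((n : ℝ) * degW R Ct t n x (x i))) *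
        (∑ j, Rt R Ct t (x i) (x j) * v j) +
      (t / ((n : ℝ) * degW R Ct t n x (x i))) *
        (∑ j, Rbart R Ct t (x i) (x j) * u (x j)) = lam * u (x i)) :
    (∀ i, v i = lam * u (x i)) ∧
    (∀ i, (1 / t) * ∑ j, Rt R Ct t (x i) (x j) * (u (x i) - u (x j)) =
      (1 / lam) * ∑ j, Rbart R Ct t (x i) (x j) * u (x j)) :=
  stmt12_general d n R t Ct ht x hw u lam hlam v ha hb
end

section
/- Let R : [0,∞) → [0,∞) be measurable and integrable, set R̄(r) = ∫_r^∞ R(s) ds, fix t > 0, C_t > 0, points x_1, …, x_n ∈ ℝ^d, and write R_t(x,y) = C_t·R(‖x−y‖²/(4t)) and R̄_t(x,y) = C_t·R̄(‖x−y‖²/(4t)). Let w(x) = (1/n)∑_{j=1}^n R_t(x,x_j) and assume w(x) > 0 for every x ∈ ℝ^d. Suppose u ∈ ℝⁿ and λ ≠ 0 satisfy the discrete eigenvalue problem (1/t)·∑_{j=1}^n R_t(x_i,x_j)(u_i−u_j) = λ·∑_{j=1}^n R̄_t(x_i,x_j)·u_j for every i. Define the function g(x) = (λ·t·∑_{j=1}^n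 R̄_t(x,x_j)·u_j + ∑_{j=1}^n R_t(x,x_j)·u_j) / ∑_{j=1}^n R_t(x,x_j). Then: (i) g(x_i) = u_i for every i; (ii) the vector v = (u_1/λ, …, u_n/λ) satisfies (1/(n·t))·∑_{j=1}^n R_t(x_i,x_j)(v_i−v_j) = (1/n)·∑_{j=1}^n R̄_t(x_i,x_j)·g(x_j) for every i; and (iii) for every x ∈ ℝ^d, (1/(n·w(x)))·∑_{j=1}^n R_t(x,x_j)·v_j + (t/(n·w(x)))·∑_{j=1}^n R̄_t(x,x_j)·g(x_j) = (1/λ)·g(x); that is, g is an eigenfunction of the operator T_{t,n} with eigenvalue 1/λ. -/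
open MeasureTheory

/-- The kernel extension `I_λ(u)` of a discrete eigenvector `u`. -/
noncomputable def kernelExt {d : ℕ} (R : ℝ → ℝ) (Ct t : ℝ) (n : ℕ)
    (x : Fin n → EuclideanSpace ℝ (Fin d)) (u : Fin n → ℝ) (lam : ℝ)
    (y : EuclideanSpace ℝ (Fin d)) : ℝ :=
  (lam * t * ∑ j, Rbart R Ct t y (x j) * u j + ∑ j, Rt R Ct t y (x j) * u j) /
    ∑ j, Rt R Ct t y (x j)

/-! Since `R̄_t(xᵢ,·)` and `R_t(xᵢ,·)` enter the eigenvalue equation only through finite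
sums, everything is linear algebra on kernel rows: the equation says
`λ t ∑ⱼ R̄_t(xᵢ,xⱼ) uⱼ + ∑ⱼ R_t(xᵢ,xⱼ) uⱼ = uᵢ ∑ⱼ R_t(xᵢ,xⱼ)`, i.e. the numerator of `g(xᵢ)`
is `uᵢ` times its denominator, so `g` interpolates `u`. Replacing `g(xⱼ)` by `uⱼ` then turns
(ii) into the eigenvalue equation divided by `λ n`, and (iii) into the definition of `g`,
because `n w(y) = ∑ⱼ R_t(y,xⱼ)`. -/

section KernelRow

variable {ι : Type*} [Fintype ι] (K L u : ι → ℝ) {a t lam : ℝ}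

theorem sum_mul_sub_eq :
    ∑ j, K j * (a - u j) = a * ∑ j, K j - ∑ j, K j * u j := by
  simp only [mul_sub, Finset.sum_sub_distrib, ← Finset.sum_mul, mul_comm a]

theorem eigen_row_rearrange (ht : t ≠ 0)
    (h : (1 / t) * ∑ j, K j * (a - u j) = lam * ∑ j, L j * u j) :
    lam * t * ∑ j, L j * u j + ∑ j, K j * u j = a * ∑ j, K j := by
  rw [sum_mul_sub_eq] at h
  field_simp at h
  linarith

theorem extension_div_eq_of_eigen_row (ht : t ≠ 0) (hK : ∑ j, K j ≠ 0)
    (h : (1 / t) * ∑ j, K j * (a - u j) = lam * ∑ j, L j * u j) :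
    (lam * t * ∑ j, L j * u j + ∑ j, K j * u j) / ∑ j, K j = a := by
  rw [eigen_row_rearrange K L u ht h, mul_div_assoc, div_self hK, mul_one]

theorem eigen_row_div (ht : t ≠ 0) (hlam : lam ≠ 0) (n : ℝ)
    (h : (1 / t) * ∑ j, K j * (a - u j) = lam * ∑ j, L j * u j) :
    (1 / (n * t)) * ∑ j, K j * (a / lam - u j / lam) = (1 / n) * ∑ j, L j * u j := by
  have hdiv : ∑ j, K j * (a / lam - u j / lam) = (1 / lam) * ∑ j, K j * (a - u j) := by
    rw [Finset.mul_sum]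
    exact Finset.sum_congr rfl fun j _ => by ring
  have hlamsum : ∑ j, K j * (a - u j) = lam * t * ∑ j, L j * u j := by
    rw [sum_mul_sub_eq]; linarith [eigen_row_rearrange K L u ht h]
  rw [hdiv, hlamsum]
  field_simp

theorem inv_mul_extension_eq (hlam : lam ≠ 0) (S : ℝ) :
    (1 / S) * ∑ j, K j * (u j / lam) + (t / S) * ∑ j, L j * u j =
      (1 / lam) * ((lam * t * ∑ j, L j * u j + ∑ j, K j * u j) / S) := by
  simp only [mul_div_assoc', ← Finset.sum_div]
  field_simp
  ring

end KernelRow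

theorem natCast_mul_degW_of_pos {d n : ℕ} {R : ℝ → ℝ} {Ct t : ℝ}
    {x : Fin n → EuclideanSpace ℝ (Fin d)} {y : EuclideanSpace ℝ (Fin d)}
    (hw : 0 < degW R Ct t n x y) :
    (n : ℝ) * degW R Ct t n x y = ∑ j, Rt R Ct t y (x j) := by
  have hn : (n : ℝ) ≠ 0 := by
    rintro hn
    simp [degW, hn] at hw
  rw [degW, ← mul_assoc, mul_one_div_cancel hn, one_mul]

theorem sum_Rt_pos_of_degW_pos {d n : ℕ} {R : ℝ → ℝ} {Ct t : ℝ}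
    {x : Fin n → EuclideanSpace ℝ (Fin d)} {y : EuclideanSpace ℝ (Fin d)}
    (hw : 0 < degW R Ct t n x y) : 0 < ∑ j, Rt R Ct t y (x j) := by
  exact pos_of_mul_pos_right hw (by positivity)

theorem stmt13_general (d n : ℕ) (R : ℝ → ℝ)
    (t Ct : ℝ) (ht : 0 < t)
    (x : Fin n → EuclideanSpace ℝ (Fin d))
    (hw : ∀ y : EuclideanSpace ℝ (Fin d), 0 < degW R Ct t n x y)
    (u : Fin n → ℝ) (lam : ℝ) (hlam : lam ≠ 0)
    (heig : ∀ i, (1 / t) * ∑ j, Rt R Ct t (x i) (x j) * (u i - u j) =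
      lam * ∑ j, Rbart R Ct t (x i) (x j) * u j) :
    (∀ i, kernelExt R Ct t n x u lam (x i) = u i) ∧
    (∀ i, (1 / ((n : ℝ) * t)) * ∑ j, Rt R Ct t (x i) (x j) * (u i / lam - u j / lam) =
      (1 / (n : ℝ)) * ∑ j, Rbart R Ct t (x i) (x j) * kernelExt R Ct t n x u lam (x j)) ∧
    (∀ y : EuclideanSpace ℝ (Fin d),
      (1 / ((n : ℝ) * degW R Ct t n x y)) * (∑ j, Rt R Ct t y (x j) * (u j / lam)) +
        (t / ((n : ℝ) * degW R Ct t n x y)) *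
          (∑ j, Rbart R Ct t y (x j) * kernelExt R Ct t n x u lam (x j)) =
      (1 / lam) * kernelExt R Ct t n x u lam y) := by
  have hg : ∀ i, kernelExt R Ct t n x u lam (x i) = u i := fun i =>
    extension_div_eq_of_eigen_row _ _ u ht.ne' (sum_Rt_pos_of_degW_pos (hw (x i))).ne' (heig i)
  have hgsum : ∀ y, ∑ j, Rbart R Ct t y (x j) * kernelExt R Ct t n x u lam (x j) =
      ∑ j, Rbart R Ct t y (x j) * u j := fun y => by simp only [hg]
  refine ⟨hg, fun i => ?_, fun y => ?_⟩
  · rw [hgsum]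
    exact eigen_row_div _ _ u ht.ne' hlam n (heig i)
  · rw [hgsum, natCast_mul_degW_of_pos (hw y)]
    exact inv_mul_extension_eq _ _ u hlam _

/-- (Proposition `prop:eigen_intergral_dis`, part 2.)  If `u ∈ ℝⁿ`
and `λ ≠ 0` satisfy the discrete eigenvalue problem
`(1/t)∑_j R_t(x_i,x_j)(u_i−u_j) = λ∑_j R̄_t(x_i,x_j)u_j`, then the kernel extension
`g = I_λ(u)` satisfies `g(x_i) = u_i`, the vector `v = u/λ` solves the discrete system
with data `g`, and `g` is an eigenfunction of `T_{t,n}` with eigenvalue `1/λ`. -/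
theorem stmt13 (d n : ℕ) (R : ℝ → ℝ) (hRmeas : Measurable R)
    (hR0 : ∀ r : ℝ, 0 ≤ R r) (hRint : IntegrableOn R (Set.Ioi (0 : ℝ)))
    (t Ct : ℝ) (ht : 0 < t) (hCt : 0 < Ct)
    (x : Fin n → EuclideanSpace ℝ (Fin d))
    (hw : ∀ y : EuclideanSpace ℝ (Fin d), 0 < degW R Ct t n x y)
    (u : Fin n → ℝ) (lam : ℝ) (hlam : lam ≠ 0)
    (heig : ∀ i, (1 / t) * ∑ j, Rt R Ct t (x i) (x j) * (u i - u j) =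
      lam * ∑ j, Rbart R Ct t (x i) (x j) * u j) :
    (∀ i, kernelExt R Ct t n x u lam (x i) = u i) ∧
    (∀ i, (1 / ((n : ℝ) * t)) * ∑ j, Rt R Ct t (x i) (x j) * (u i / lam - u j / lam) =
      (1 / (n : ℝ)) * ∑ j, Rbart R Ct t (x i) (x j) * kernelExt R Ct t n x u lam (x j)) ∧
    (∀ y : EuclideanSpace ℝ (Fin d),
      (1 / ((n : ℝ) * degW R Ct t n x y)) * (∑ j, Rt R Ct t y (x j) * (u j / lam)) +
        (t / ((n : ℝ) * degW R Ct t n x y)) *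
          (∑ j, Rbart R Ct t y (x j) * kernelExt R Ct t n x u lam (x j)) =
      (1 / lam) * kernelExt R Ct t n x u lam y) :=
  stmt13_general d n R t Ct ht x hw u lam hlam heig
end

section
/- Let B > 0, W̄ > 0, w₀ > 0, V > 0, t > 0, C_t > 0, let R : [0,∞) → [0,B] and R̄ : [0,∞) → [0,∞) be measurable, let x_1, …, x_n ∈ ℝ^d, and let μ be a finite measure on ℝ^d. Set w(x) = (C_t/n)·∑_{i=1}^n R(‖x−x_i‖²/(4t)) and assume for every x ∈ ℝ^d that w(x) ≥ w₀ and (C_t/n)·∑_{i=1}^n R̄(‖x−x_i‖²/(4t)) ≤ W̄, and assume ∫ C_t·R(‖x−x_i‖²/(4t))/w(x) dμ(x) ≤ V for every i. Let u ∈ ℝⁿ and f : ℝ^d → ℝ, and define Tf(x) = (C_t/(n·w(x)))·∑_{i=1}^n R(‖x−x_i‖²/(4t))·u_i + (t·C_t/(n·w(x)))·∑_{i=1}^n R̄(‖x−x_i‖²/(4t))·f(x_i). Then ∫ |Tf(x)|² dμ(x) ≤ (2V/n)·∑_{i=1}^n u_i² + 2·t²·(W̄/w₀)²·(max_{1≤i≤n}|f(x_i)|)²·μ(ℝ^d).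 -/
/-!
With `k_i(y) = (C_t/n) R(‖y - x_i‖²/(4t))`, `k̄_i` likewise with `R̄`, and `w = ∑ k_i`, we have
`Tf = (∑ k_i u_i + t ∑ k̄_i f(x_i)) / w`.
By `(a + b)² ≤ 2a² + 2b²` it suffices to bound the two parts separately. The first is a
convex combination of the `u_i` with weights `k_i / w`, so Jensen gives
`(∑ k_i u_i / w)² ≤ ∑ (k_i / w) u_i²`, whose integral is at most `(V / n) ∑ u_i²` by the hypothesis
on `∫ C_t R(…) / w`. The second is bounded pointwise by `|t| (W̄ / w₀) max_i |f(x_i)|`, since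
`∑ k̄_i ≤ W̄` and `w ≥ w₀`.
-/

open MeasureTheory Finset

section WeightedSums

variable {ι : Type*} (s : Finset ι)

theorem sq_sum_mul_div_sum_le {g : ι → ℝ} (hg : ∀ i ∈ s, 0 ≤ g i) (u : ι → ℝ) :
    ((∑ i ∈ s, g i * u i) / ∑ i ∈ s, g i) ^ 2 ≤ ∑ i ∈ s, g i / (∑ j ∈ s, g j) * u i ^ 2 := by
  set S := ∑ i ∈ s, g i
  have hS : 0 ≤ S := sum_nonneg hg
  have cauchySchwarz : (∑ i ∈ s, g i * u i) ^ 2 ≤ S * ∑ i ∈ s, g i * u i ^ 2 :=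
    sum_sq_le_sum_mul_sum_of_sq_le_mul s hg (fun i hi => mul_nonneg (hg i hi) (sq_nonneg _))
      (fun i _ => le_of_eq (by ring))
  simp_rw [div_mul_eq_mul_div, ← sum_div]
  rcases hS.eq_or_lt with hS0 | hSpos
  · simp [← hS0]
  calc ((∑ i ∈ s, g i * u i) / S) ^ 2 = (∑ i ∈ s, g i * u i) ^ 2 / S / S := by ring
    _ ≤ S * (∑ i ∈ s, g i * u i ^ 2) / S / S := by gcongr
    _ = (∑ i ∈ s, g i * u i ^ 2) / S := by rw [mul_div_cancel_left₀ _ hSpos.ne']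

theorem sq_sum_mul_div_le_of_abs_le {kb v : ι → ℝ} {W w₀ w M : ℝ} (hkb : ∀ i ∈ s, 0 ≤ kb i)
    (hv : ∀ i ∈ s, |v i| ≤ M) (hW : ∑ i ∈ s, kb i ≤ W) (hw₀ : 0 < w₀) (hw : w₀ ≤ w) :
    ((∑ i ∈ s, kb i * v i) / w) ^ 2 ≤ (W / w₀) ^ 2 * M ^ 2 := by
  have hsum : |∑ i ∈ s, kb i * v i| ≤ |M| * ∑ i ∈ s, kb i :=
    calc |∑ i ∈ s, kb i * v i| ≤ ∑ i ∈ s, kb i * |v i| := by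
          refine (abs_sum_le_sum_abs _ _).trans_eq (sum_congr rfl fun i hi => ?_)
          rw [abs_mul, abs_of_nonneg (hkb i hi)]
      _ ≤ ∑ i ∈ s, kb i * |M| :=
          sum_le_sum fun i hi =>
            mul_le_mul_of_nonneg_left ((hv i hi).trans (le_abs_self M)) (hkb i hi)
      _ = |M| * ∑ i ∈ s, kb i := by rw [← sum_mul, mul_comm]
  have hratio : (∑ i ∈ s, kb i) / w ≤ W / w₀ :=
    div_le_div₀ ((sum_nonneg hkb).trans hW) hW hw₀ hw
  have hw_pos : 0 < w := hw₀.trans_le hw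
  have hbound : |(∑ i ∈ s, kb i * v i) / w| ≤ |M| * (W / w₀) :=
    calc |(∑ i ∈ s, kb i * v i) / w| = |∑ i ∈ s, kb i * v i| / w := by
          rw [abs_div, abs_of_pos hw_pos]
      _ ≤ |M| * (∑ i ∈ s, kb i) / w := by gcongr
      _ = |M| * ((∑ i ∈ s, kb i) / w) := mul_div_assoc _ _ _
      _ ≤ |M| * (W / w₀) := by gcongr
  calc ((∑ i ∈ s, kb i * v i) / w) ^ 2 = |(∑ i ∈ s, kb i * v i) / w| ^ 2 := (sq_abs _).symm
    _ ≤ (|M| * (W / w₀)) ^ 2 := by gcongr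
    _ = (W / w₀) ^ 2 * M ^ 2 := by rw [mul_pow, sq_abs, mul_comm]

end WeightedSums

section KernelInterpolation

variable {α ι : Type*} [MeasurableSpace α] [Fintype ι] {μ : Measure α} [IsFiniteMeasure μ]
  {k : ι → α → ℝ}

theorem integrable_div_sum (hk : ∀ i, Measurable (k i)) (hk0 : ∀ i y, 0 ≤ k i y) (i : ι) :
    Integrable (fun y => k i y / ∑ j, k j y) μ := by
  refine .of_bound ((hk i).div (Finset.measurable_sum _ fun j _ => hk j)).aestronglyMeasurable 1
    (ae_of_all _ fun y => ?_)
  have hsum : 0 ≤ ∑ j, k j y := sum_nonneg fun j _ => hk0 j y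
  rw [Real.norm_of_nonneg (div_nonneg (hk0 i y) hsum)]
  exact div_le_one_of_le₀ (single_le_sum (fun j _ => hk0 j y) (mem_univ i)) hsum

theorem integral_sq_sum_add_sum_div_le (hk : ∀ i, Measurable (k i)) (hk0 : ∀ i y, 0 ≤ k i y)
    {kb : ι → α → ℝ} (hkb0 : ∀ i y, 0 ≤ kb i y) {w₀ W V M : ℝ} (hw₀ : 0 < w₀)
    (hw : ∀ y, w₀ ≤ ∑ i, k i y) (hW : ∀ y, ∑ i, kb i y ≤ W)
    (hV : ∀ i, ∫ y, k i y / ∑ j, k j y ∂μ ≤ V) (t : ℝ) (u v : ι → ℝ) (hv : ∀ i, |v i| ≤ M) :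
    ∫ y, ((∑ i, k i y * u i + t * ∑ i, kb i y * v i) / ∑ i, k i y) ^ 2 ∂μ ≤
      2 * V * ∑ i, u i ^ 2 + 2 * t ^ 2 * (W / w₀) ^ 2 * M ^ 2 * μ.real Set.univ := by
  set C := t ^ 2 * ((W / w₀) ^ 2 * M ^ 2)
  have hint : Integrable (fun y => ∑ i, k i y / (∑ j, k j y) * u i ^ 2) μ :=
    integrable_finsetSum _ fun i _ => (integrable_div_sum hk hk0 i).mul_const _
  have hpointwise : ∀ y, ((∑ i, k i y * u i + t * ∑ i, kb i y * v i) / ∑ i, k i y) ^ 2 ≤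
      2 * ∑ i, k i y / (∑ j, k j y) * u i ^ 2 + 2 * C := by
    intro y
    have hfirst := sq_sum_mul_div_sum_le univ (fun i _ => hk0 i y) u
    have hsecond := sq_sum_mul_div_le_of_abs_le univ (fun i _ => hkb0 i y) (fun i _ => hv i)
      (hW y) hw₀ (hw y)
    calc ((∑ i, k i y * u i + t * ∑ i, kb i y * v i) / ∑ i, k i y) ^ 2
        ≤ 2 * (((∑ i, k i y * u i) / ∑ i, k i y) ^ 2
            + t ^ 2 * ((∑ i, kb i y * v i) / ∑ i, k i y) ^ 2) := by
          rw [add_div, mul_div_assoc, ← mul_pow]; exact add_sq_le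
      _ ≤ 2 * ∑ i, k i y / (∑ j, k j y) * u i ^ 2 + 2 * C := by
          have := mul_le_mul_of_nonneg_left hsecond (sq_nonneg t); linarith
  have hintegral_first : ∫ y, ∑ i, k i y / (∑ j, k j y) * u i ^ 2 ∂μ ≤ V * ∑ i, u i ^ 2 := by
    rw [integral_finsetSum _ fun i _ => (integrable_div_sum hk hk0 i).mul_const _, mul_sum]
    refine sum_le_sum fun i _ => ?_
    rw [integral_mul_const]
    exact mul_le_mul_of_nonneg_right (hV i) (sq_nonneg _)
  -- `integral_mono_of_nonneg` needs no integrability of the left side (else its integral is `0`).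
  calc _ ≤ ∫ y, 2 * ∑ i, k i y / (∑ j, k j y) * u i ^ 2 + 2 * C ∂μ :=
        integral_mono_of_nonneg (ae_of_all _ fun y => sq_nonneg _)
          ((hint.const_mul 2).add (integrable_const _)) (ae_of_all _ hpointwise)
    _ = 2 * ∫ y, ∑ i, k i y / (∑ j, k j y) * u i ^ 2 ∂μ + μ.real Set.univ * (2 * C) := by
        rw [integral_add (hint.const_mul 2) (integrable_const _), integral_const_mul,
          integral_const, smul_eq_mul]
    _ ≤ _ := by linarith

end KernelInterpolation

theorem stmt15_general (d n : ℕ) (W' w₀ V t Ct : ℝ)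
    (hw₀ : 0 < w₀) (hCt : 0 < Ct)
    (R Rb : ℝ → ℝ) (hRmeas : Measurable R)
    (hR0 : ∀ r : ℝ, 0 ≤ R r) (hRb0 : ∀ r : ℝ, 0 ≤ Rb r)
    (x : Fin n → EuclideanSpace ℝ (Fin d))
    (μ : Measure (EuclideanSpace ℝ (Fin d))) [IsFiniteMeasure μ]
    (hw : ∀ y : EuclideanSpace ℝ (Fin d),
      w₀ ≤ (Ct / n) * ∑ i, R (‖y - x i‖ ^ 2 / (4 * t)))
    (hWbar : ∀ y : EuclideanSpace ℝ (Fin d),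
      (Ct / n) * ∑ i, Rb (‖y - x i‖ ^ 2 / (4 * t)) ≤ W')
    (hV' : ∀ i : Fin n,
      (∫ y, Ct * R (‖y - x i‖ ^ 2 / (4 * t)) /
          ((Ct / n) * ∑ l, R (‖y - x l‖ ^ 2 / (4 * t))) ∂μ) ≤ V)
    (u : Fin n → ℝ) (f : EuclideanSpace ℝ (Fin d) → ℝ) :
    (∫ y, ((Ct / ((n : ℝ) * ((Ct / n) * ∑ i, R (‖y - x i‖ ^ 2 / (4 * t))))) *
          (∑ i, R (‖y - x i‖ ^ 2 / (4 * t)) * u i) +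
        (t * Ct / ((n : ℝ) * ((Ct / n) * ∑ i, R (‖y - x i‖ ^ 2 / (4 * t))))) *
          (∑ i, Rb (‖y - x i‖ ^ 2 / (4 * t)) * f (x i))) ^ 2 ∂μ) ≤
      (2 * V / n) * ∑ i, (u i) ^ 2 +
        2 * t ^ 2 * (W' / w₀) ^ 2 * (⨆ i : Fin n, |f (x i)|) ^ 2 *
          (μ Set.univ).toReal := by
  set c := Ct / n with hc_def
  set r : Fin n → EuclideanSpace ℝ (Fin d) → ℝ := fun i y => ‖y - x i‖ ^ 2 / (4 * t)
  have hc : 0 ≤ c := div_nonneg hCt.le n.cast_nonneg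
  have hr : ∀ i, Measurable (r i) := fun i => by fun_prop
  have hV : ∀ i, ∫ y, c * R (r i y) / ∑ j, c * R (r j y) ∂μ ≤ V / n := fun i => by
    have hscale : (fun y => c * R (r i y) / ∑ j, c * R (r j y)) =
        fun y => Ct * R (r i y) / (c * ∑ j, R (r j y)) / n := by
      funext y; rw [← mul_sum, hc_def]; ring
    rw [hscale, integral_div]
    exact div_le_div_of_nonneg_right (hV' i) n.cast_nonneg
  have hbound := integral_sq_sum_add_sum_div_le (fun i => (hRmeas.comp (hr i)).const_mul c)
    (fun i y => mul_nonneg hc (hR0 _)) (kb := fun i y => c * Rb (r i y))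
    (fun i y => mul_nonneg hc (hRb0 _)) hw₀ (fun y => (hw y).trans_eq (mul_sum _ _ _))
    (fun y => (mul_sum _ _ _).symm.trans_le (hWbar y)) hV t u (f ∘ x)
    (M := ⨆ i, |f (x i)|) (fun i => le_ciSup (Finite.bddAbove_range fun j => |f (x j)|) i)
  refine (le_of_eq (integral_congr_ae (ae_of_all _ fun y => ?_))).trans (hbound.trans_eq ?_)
  · simp only [mul_assoc, ← mul_sum, Function.comp]
    ring
  · rw [measureReal_def]; ring

/-- (`L²` bound on the interpolated solution `T_{t,n}f`,
cf. Theorem `thm:bound-Ttn`.)  If `w(x) = (C_t/n)∑_i R(‖x−x_i‖²/(4t)) ≥ w₀ > 0`,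
`(C_t/n)∑_i R̄(‖x−x_i‖²/(4t)) ≤ W̄` for all `x`, and
`∫ C_t·R(‖x−x_i‖²/(4t))/w(x) dμ(x) ≤ V` for every `i`, then the function
`Tf(x) = (C_t/(n·w(x)))∑_i R(‖x−x_i‖²/(4t))u_i + (t·C_t/(n·w(x)))∑_i R̄(‖x−x_i‖²/(4t))f(x_i)`
satisfies `∫ |Tf|² dμ ≤ (2V/n)∑ u_i² + 2t²(W̄/w₀)²(max_i |f(x_i)|)²·μ(ℝ^d)`. -/
theorem stmt15 (d n : ℕ) (B W' w₀ V t Ct : ℝ)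
    (hB : 0 < B) (hW' : 0 < W') (hw₀ : 0 < w₀) (hV : 0 < V) (ht : 0 < t) (hCt : 0 < Ct)
    (R Rb : ℝ → ℝ) (hRmeas : Measurable R) (hRbmeas : Measurable Rb)
    (hR0 : ∀ r : ℝ, 0 ≤ R r) (hRB : ∀ r : ℝ, R r ≤ B) (hRb0 : ∀ r : ℝ, 0 ≤ Rb r)
    (x : Fin n → EuclideanSpace ℝ (Fin d))
    (μ : Measure (EuclideanSpace ℝ (Fin d))) [IsFiniteMeasure μ]
    (hw : ∀ y : EuclideanSpace ℝ (Fin d),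
      w₀ ≤ (Ct / n) * ∑ i, R (‖y - x i‖ ^ 2 / (4 * t)))
    (hWbar : ∀ y : EuclideanSpace ℝ (Fin d),
      (Ct / n) * ∑ i, Rb (‖y - x i‖ ^ 2 / (4 * t)) ≤ W')
    (hV' : ∀ i : Fin n,
      (∫ y, Ct * R (‖y - x i‖ ^ 2 / (4 * t)) /
          ((Ct / n) * ∑ l, R (‖y - x l‖ ^ 2 / (4 * t))) ∂μ) ≤ V)
    (u : Fin n → ℝ) (f : EuclideanSpace ℝ (Fin d) → ℝ) :
    (∫ y, ((Ct / ((n : ℝ) * ((Ct / n) * ∑ i, R (‖y - x i‖ ^ 2 / (4 * t))))) *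
          (∑ i, R (‖y - x i‖ ^ 2 / (4 * t)) * u i) +
        (t * Ct / ((n : ℝ) * ((Ct / n) * ∑ i, R (‖y - x i‖ ^ 2 / (4 * t))))) *
          (∑ i, Rb (‖y - x i‖ ^ 2 / (4 * t)) * f (x i))) ^ 2 ∂μ) ≤
      (2 * V / n) * ∑ i, (u i) ^ 2 +
        2 * t ^ 2 * (W' / w₀) ^ 2 * (⨆ i : Fin n, |f (x i)|) ^ 2 *
          (μ Set.univ).toReal :=
  stmt15_general d n W' w₀ V t Ct hw₀ hCt R Rb hRmeas hR0 hRb0 x μ hw hWbar hV' u f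
end
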